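/- arXiv:1512.06765 — 11 statements merged into one kernel-verified Lean document; each statement's English description precedes it below -/
import Mathlib

section
/- Let g ≥ 1 be an integer, let e_1, …, e_{2g+2} be complex numbers, and let f(x) = ∏_{m=1}^{2g+2} (x − e_m). For every x ∈ ℂ with f(x) ≠ 0, the sum over all (g+1)-element subsets S of {1, …, 2g+2} satisfies ∑_S ( ∑_{i∈S} 1/(x − e_i) )² = C(2g+1, g) · ( (2g+1) f′(x)² − (g+1) f(x) f″(x) ) / ( (2g+1) f(x)² ). -/
/-!
Put `a i = 1 / (x - e i)`, `A = ∑ a i` and `B = ∑ a i ^ 2`. Logarithmic differentiation of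
`f = ∏ (x - e m)` gives `f' = f A` and `f'' = f (A ^ 2 - B)`. Expanding the squares, `a i ^ 2` is
counted once for each of the `C(2g+1, g)` subsets containing `i`, and `a i * a j` (`i ≠ j`) once
for each of the `C(2g, g+1)` subsets containing both, so the left side is
`C(2g+1, g) B + C(2g, g+1) (A ^ 2 - B)`. The identity `(2g+1) C(2g, g+1) = g C(2g+1, g)` turns
this into the right side.
-/

open Finset

theorem card_filter_superset_powersetCard {α : Type*} [Fintype α] [DecidableEq α]
    (T : Finset α) {k : ℕ} (hk : k ≤ Fintype.card α) :
    #{S ∈ powersetCard k univ | T ⊆ S} = (Fintype.card α - #T).choose (Fintype.card α - k) := by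
  rw [← card_compl T, ← card_powersetCard]
  refine card_nbij' compl compl (fun S hS => ?_) (fun S hS => ?_) (fun S _ => compl_compl S)
    (fun S _ => compl_compl S)
  · simp only [coe_filter, mem_powersetCard, subset_univ, true_and] at hS
    simp [card_compl, hS.1, compl_subset_compl.mpr hS.2]
  · simp only [mem_coe, mem_powersetCard] at hS
    simp [card_compl, hS.2, subset_compl_comm.mp hS.1]
    omega

theorem sum_mul_sum_erase {ι R : Type*} [CommRing R] [DecidableEq ι] (s : Finset ι) (a : ι → R) :
    ∑ i ∈ s, a i * ∑ j ∈ s.erase i, a j = (∑ i ∈ s, a i) ^ 2 - ∑ i ∈ s, a i ^ 2 := by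
  rw [sum_congr rfl fun i hi => by rw [sum_erase_eq_sub hi]]
  simp only [mul_sub, sum_sub_distrib, ← sum_mul, sq]

theorem sum_sq_sum_eq_sum_sum_card_filter {α R : Type*} [Fintype α] [DecidableEq α]
    [CommSemiring R] (𝒜 : Finset (Finset α)) (a : α → R) :
    ∑ S ∈ 𝒜, (∑ i ∈ S, a i) ^ 2 = ∑ i, ∑ j, #{S ∈ 𝒜 | {i, j} ⊆ S} • (a i * a j) := by
  have hS (S : Finset α) :
      (∑ i ∈ S, a i) ^ 2 = ∑ i, ∑ j, if {i, j} ⊆ S then a i * a j else 0 := by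
    rw [← univ_inter S, ← sum_ite_mem, sq, sum_mul_sum]
    simp only [ite_zero_mul_ite_zero, insert_subset_iff, singleton_subset_iff, univ_inter]
  simp only [hS]
  rw [sum_comm]
  refine sum_congr rfl fun i _ => ?_
  rw [sum_comm]
  refine sum_congr rfl fun j _ => ?_
  rw [← sum_filter, sum_const]

theorem sum_powersetCard_sq_sum {α R : Type*} [Fintype α] [DecidableEq α] [CommRing R]
    {k : ℕ} (hk : k ≤ Fintype.card α) (a : α → R) :
    ∑ S ∈ powersetCard k univ, (∑ i ∈ S, a i) ^ 2 =
      ((Fintype.card α - 1).choose (Fintype.card α - k) : R) * ∑ i, a i ^ 2 +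
        ((Fintype.card α - 2).choose (Fintype.card α - k) : R) *
          ((∑ i, a i) ^ 2 - ∑ i, a i ^ 2) := by
  rw [sum_sq_sum_eq_sum_sum_card_filter, ← sum_mul_sum_erase, mul_sum, mul_sum, ← sum_add_distrib]
  refine sum_congr rfl fun i _ => ?_
  rw [← add_sum_erase _ _ (mem_univ i), mul_sum, mul_sum]
  congr 1
  · rw [pair_eq_singleton, card_filter_superset_powersetCard _ hk, card_singleton, nsmul_eq_mul, sq]
  · refine sum_congr rfl fun j hj => ?_
    rw [card_filter_superset_powersetCard _ hk, card_pair (ne_of_mem_erase hj).symm, nsmul_eq_mul]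

theorem two_mul_add_one_mul_choose_succ (g : ℕ) :
    (2 * g + 1) * (2 * g).choose (g + 1) = g * (2 * g + 1).choose g := by
  rw [mul_comm, Nat.choose_mul_succ_eq, Nat.choose_symm_half, mul_comm]
  congr 2
  omega

section ProdSub

variable {𝕜 ι : Type*} [NontriviallyNormedField 𝕜] [DecidableEq ι] (s : Finset ι) (e : ι → 𝕜)

theorem hasDerivAt_prod_sub (y : 𝕜) :
    HasDerivAt (fun z => ∏ m ∈ s, (z - e m)) (∑ i ∈ s, ∏ j ∈ s.erase i, (y - e j)) y := by
  simpa using HasDerivAt.fun_finsetProd (u := s) (f := fun m z => z - e m) (f' := fun _ => 1)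
    fun i _ => (hasDerivAt_id y).sub_const (e i)

variable {s e} {y : 𝕜}

theorem prod_erase_sub (hne : ∀ i ∈ s, y - e i ≠ 0) {i : ι} (hi : i ∈ s) :
    ∏ j ∈ s.erase i, (y - e j) = (∏ j ∈ s, (y - e j)) * (y - e i)⁻¹ :=
  (eq_mul_inv_iff_mul_eq₀ (hne i hi)).mpr (prod_erase_mul s (fun j => y - e j) hi)

theorem deriv_prod_sub (hne : ∀ i ∈ s, y - e i ≠ 0) :
    deriv (fun z => ∏ m ∈ s, (z - e m)) y = (∏ m ∈ s, (y - e m)) * ∑ i ∈ s, (y - e i)⁻¹ := by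
  rw [(hasDerivAt_prod_sub s e y).deriv, mul_sum]
  exact sum_congr rfl fun i hi => prod_erase_sub hne hi

theorem deriv_deriv_prod_sub (hne : ∀ i ∈ s, y - e i ≠ 0) :
    deriv (deriv fun z => ∏ m ∈ s, (z - e m)) y =
      (∏ m ∈ s, (y - e m)) * ((∑ i ∈ s, (y - e i)⁻¹) ^ 2 - ∑ i ∈ s, ((y - e i)⁻¹) ^ 2) := by
  have hderiv : deriv (fun z => ∏ m ∈ s, (z - e m)) =
      fun z => ∑ i ∈ s, ∏ j ∈ s.erase i, (z - e j) :=
    funext fun z => (hasDerivAt_prod_sub s e z).deriv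
  rw [hderiv, deriv_fun_sum fun i _ => (hasDerivAt_prod_sub _ e y).differentiableAt,
    ← sum_mul_sum_erase, mul_sum]
  refine sum_congr rfl fun i hi => ?_
  rw [deriv_prod_sub fun j hj => hne j (mem_of_mem_erase hj), prod_erase_sub hne hi, mul_assoc]

end ProdSub

theorem sum_over_subsets_of_partial_fractions_sq_general
    (g : ℕ) (e : Fin (2 * g + 2) → ℂ)
    (f : ℂ → ℂ) (hf : f = fun x => ∏ m, (x - e m))
    (x : ℂ) (hx : f x ≠ 0) :
    ∑ S ∈ Finset.powersetCard (g + 1) (Finset.univ : Finset (Fin (2 * g + 2))),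
        (∑ i ∈ S, 1 / (x - e i)) ^ 2
      = (Nat.choose (2 * g + 1) g : ℂ) *
          ((2 * (g : ℂ) + 1) * (deriv f x) ^ 2 - ((g : ℂ) + 1) * f x * deriv (deriv f) x) /
          ((2 * (g : ℂ) + 1) * (f x) ^ 2) := by
  subst hf
  have hne : ∀ i ∈ univ, x - e i ≠ 0 := prod_ne_zero_iff.mp hx
  have hk : g + 1 ≤ Fintype.card (Fin (2 * g + 2)) := by simp only [Fintype.card_fin]; omega
  have hcount : (2 * (g : ℂ) + 1) * (2 * g).choose (g + 1) = g * (2 * g + 1).choose g := by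
    exact_mod_cast two_mul_add_one_mul_choose_succ g
  have hodd : 2 * (g : ℂ) + 1 ≠ 0 := by exact_mod_cast (2 * g).succ_ne_zero
  simp only [one_div]
  rw [sum_powersetCard_sq_sum hk, deriv_prod_sub hne, deriv_deriv_prod_sub hne,
    eq_div_iff (mul_ne_zero hodd (pow_ne_zero 2 hx))]
  simp only [Fintype.card_fin, show 2 * g + 2 - 1 = 2 * g + 1 by omega,
    show 2 * g + 2 - 2 = 2 * g by omega, show 2 * g + 2 - (g + 1) = g + 1 by omega,
    Nat.choose_symm_half]
  linear_combination ((∏ m, (x - e m)) ^ 2 *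
    ((∑ i, (x - e i)⁻¹) ^ 2 - ∑ i, ((x - e i)⁻¹) ^ 2)) * hcount

/-- For `f(x) = ∏_{m=1}^{2g+2} (x - e_m)` and `f x ≠ 0`, the sum over all
`(g+1)`-element subsets `S` of `(∑_{i ∈ S} 1/(x - e_i))²` equals
`C(2g+1, g) · ((2g+1) f'(x)² − (g+1) f(x) f''(x)) / ((2g+1) f(x)²)`. -/
theorem sum_over_subsets_of_partial_fractions_sq
    (g : ℕ) (hg : 1 ≤ g) (e : Fin (2 * g + 2) → ℂ)
    (f : ℂ → ℂ) (hf : f = fun x => ∏ m, (x - e m))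
    (x : ℂ) (hx : f x ≠ 0) :
    ∑ S ∈ Finset.powersetCard (g + 1) (Finset.univ : Finset (Fin (2 * g + 2))),
        (∑ i ∈ S, 1 / (x - e i)) ^ 2
      = (Nat.choose (2 * g + 1) g : ℂ) *
          ((2 * (g : ℂ) + 1) * (deriv f x) ^ 2 - ((g : ℂ) + 1) * f x * deriv (deriv f) x) /
          ((2 * (g : ℂ) + 1) * (f x) ^ 2) :=
  sum_over_subsets_of_partial_fractions_sq_general g e f hf x hx
end

section
/- Let g ≥ 1, let e_1, …, e_{2g+2} ∈ ℂ, let f(x) = ∏_{m=1}^{2g+2}(x − e_m) = ∑_{k=0}^{2g+2} λ_k x^k, and for each (g+1)-element subset S of {1,…,2g+2} let Λ^{[S]} be the unique symmetric g×g complex matrix with P_S(x)P_{S^c}(z) + P_S(z)P_{S^c}(x) − F(x,z) = (x−z)² ∑_{i,j=1}^{g} Λ^{[S]}_{ij} x^{i−1} z^{j−1}. Then for every x ∈ ℂ: ∑_S ∑_{i,j=1}^{g} Λ^{[S]}_{ij} x^{i+j−2} = 2 ∑_{k=2}^{2g} Σ_{g;k} λ_k x^{k−2}, where Σ_{g;k}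 = (C(2g+1,g)/(4g+2))·( k(2g+2−k)/2 + ((2g+1)/4)((−1)^k − 1) ). Equivalently, for each k with 2 ≤ k ≤ 2g, the (k−1)-th anti-diagonal sum ∑_{i+j=k} (Λ_g)_{ij} of the matrix Λ_g := (1/2) ∑_S Λ^{[S]} equals Σ_{g;k} λ_k. -/
/-!
Fix `x` and read the defining identity of `Λ^{[S]}` as an identity of polynomials in `z`.
Summed over `S` and differentiated twice in `z` at `z = x`, its right side becomes
`2 ∑_S ∑_{i,j} Λ^{[S]}_{ij} x^{i+j}`. On the left, `P_S(x) P_{S^c}''(x)` is a sum over ordered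
pairs of distinct roots outside `S` of `f(x)` with those two factors removed; summing over `S`,
every ordered pair is counted `C(2g, g+1)` times, so both mixed terms together give
`2 C(2g, g+1) f''(x)`. Writing `F(x, z) = ∑ λ_k (x^⌊k/2⌋ z^⌈k/2⌉ + x^⌈k/2⌉ z^⌊k/2⌋)` shows that
`F_zz(x, x) = ∑ λ_k (⌊k/2⌋(⌊k/2⌋-1) + ⌈k/2⌉(⌈k/2⌉-1)) x^{k-2}`, and comparing the coefficients of
`λ_k x^{k-2}` produces `Σ_{g;k}`. The anti-diagonal sums are the coefficients of the resulting
polynomial identity in `x`.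
-/

open Finset Polynomial

theorem Finset.sum_powersetCard_compl {ι M : Type*} [Fintype ι] [DecidableEq ι]
    [AddCommMonoid M] (h : Finset ι → M) {m : ℕ} (hm : m ≤ Fintype.card ι) :
    ∑ S ∈ powersetCard m univ, h Sᶜ = ∑ S ∈ powersetCard (Fintype.card ι - m) univ, h S := by
  refine sum_nbij' compl compl (fun S hS => ?_) (fun S hS => ?_) (fun S _ => compl_compl S)
    (fun S _ => compl_compl S) (fun S _ => rfl) <;>
  · simp only [mem_powersetCard, subset_univ, true_and, card_compl] at hS ⊢
    omega

theorem Finset.sum_range_two_mul {M : Type*} [AddCommMonoid M] (h : ℕ → M) (n : ℕ) :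
    ∑ k ∈ range (2 * n), h k = ∑ j ∈ range n, (h (2 * j) + h (2 * j + 1)) := by
  induction n with
  | zero => simp
  | succ n ih => rw [mul_add_one, sum_range_succ, sum_range_succ, ih, sum_range_succ, add_assoc]

namespace Polynomial

theorem eval_derivative_derivative_C_mul_X_pow {R : Type*} [CommSemiring R] (c x : R) (n : ℕ) :
    (derivative (derivative (C c * X ^ n))).eval x = c * n.descFactorial 2 * x ^ (n - 2) := by
  have := iterate_derivative_X_pow_eq_C_mul (R := R) n 2
  simp only [Function.iterate_succ, Function.iterate_zero, Function.comp_apply, id] at this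
  simp [this, mul_assoc]

variable {R : Type*} [CommRing R]

theorem eval_derivative_derivative_X_sub_C_sq_mul (a : R) (q : R[X]) :
    (derivative (derivative ((X - C a) ^ 2 * q))).eval a = 2 * q.eval a := by
  simp [derivative_mul, derivative_pow]

variable {ι : Type*} [DecidableEq ι]

theorem eval_derivative_derivative_prod_X_sub_C (e : ι → R) (s : Finset ι) (x : R) :
    (derivative (derivative (∏ i ∈ s, (X - C (e i))))).eval x
      = ∑ p ∈ s.offDiag, ∏ i ∈ s \ {p.1, p.2}, (x - e i) := by
  have hd : ∀ t : Finset ι, derivative (∏ i ∈ t, (X - C (e i)))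
      = ∑ a ∈ t, ∏ i ∈ t.erase a, (X - C (e i)) := by
    intro t; simp [derivative_prod_finset]
  rw [hd, derivative_sum]
  simp only [hd, eval_finsetSum, eval_prod, eval_sub, eval_X, eval_C]
  rw [sum_finset_product _ _ (fun a => s.erase a) (by simp only [mem_offDiag, mem_erase]; tauto)]
  refine sum_congr rfl fun a _ => sum_congr rfl fun b _ => ?_
  rw [sdiff_insert, sdiff_singleton_eq_erase, erase_right_comm]

theorem sum_powersetCard_mul_eval_derivative_derivative_prod_compl [Fintype ι]
    (e : ι → R) (m : ℕ) (x : R) :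
    ∑ S ∈ powersetCard m univ,
        (∏ i ∈ S, (x - e i)) * (derivative (derivative (∏ i ∈ Sᶜ, (X - C (e i))))).eval x
      = (Fintype.card ι - 2).choose m *
          (derivative (derivative (∏ i, (X - C (e i))))).eval x := by
  simp only [eval_derivative_derivative_prod_X_sub_C, mul_sum]
  have hprod : ∀ S ∈ powersetCard m univ, ∀ p ∈ Sᶜ.offDiag,
      (∏ i ∈ S, (x - e i)) * ∏ i ∈ Sᶜ \ {p.1, p.2}, (x - e i)
        = ∏ i ∈ univ \ {p.1, p.2}, (x - e i) := by
    intro S _ p hp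
    have hS : S ⊆ univ \ {p.1, p.2} := by
      intro i hi; simp only [mem_offDiag, mem_compl] at hp; aesop
    rw [compl_eq_univ_sdiff, sdiff_right_comm, mul_comm, prod_sdiff hS]
  rw [sum_congr rfl fun S hS => sum_congr rfl (hprod S hS),
    sum_comm' (t' := univ.offDiag) (s' := fun p => powersetCard m (univ \ {p.1, p.2}))]
  · refine sum_congr rfl fun p hp => ?_
    rw [sum_const, card_powersetCard, card_sdiff_of_subset (subset_univ _),
      card_pair (mem_offDiag.mp hp).2.2, card_univ, nsmul_eq_mul]
  · intro S p
    simp only [mem_powersetCard, mem_offDiag, mem_compl, subset_iff, mem_sdiff, mem_univ,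
      mem_insert, mem_singleton]
    grind

variable [Fintype ι]

theorem eval_derivative_derivative_sum_partition (e : ι → R) (m : ℕ) (hm : m ≤ Fintype.card ι)
    (x : R) :
    (derivative (derivative (∑ S ∈ powersetCard m univ,
        (C (∏ i ∈ S, (x - e i)) * ∏ i ∈ Sᶜ, (X - C (e i))
          + C (∏ i ∈ Sᶜ, (x - e i)) * ∏ i ∈ S, (X - C (e i)))))).eval x
      = ((Fintype.card ι - 2).choose m + (Fintype.card ι - 2).choose (Fintype.card ι - m)) *
          (derivative (derivative (∏ i, (X - C (e i))))).eval x := by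
  have hswap := sum_powersetCard_compl
    (fun T => (∏ i ∈ T, (x - e i)) * (derivative (derivative (∏ i ∈ Tᶜ, (X - C (e i))))).eval x) hm
  simp only [compl_compl] at hswap
  simp only [derivative_sum, derivative_add, derivative_C_mul, eval_finsetSum, eval_add, eval_mul,
    eval_C, sum_add_distrib, hswap, sum_powersetCard_mul_eval_derivative_derivative_prod_compl]
  ring

end Polynomial

section Polarization

variable {R : Type*} [CommSemiring R]

/-- The Kleinian 2-polar is `F(x, z) = ∑ λ_k φ_k(x, z)` with `φ_k` this polynomial in `z`;
note `φ_k(x, x) = 2 x^k`. -/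
noncomputable def polarMonomial (x : R) (k : ℕ) : R[X] :=
  C (x ^ (k / 2)) * X ^ (k - k / 2) + C (x ^ (k - k / 2)) * X ^ (k / 2)

theorem sum_range_mul_eval_polarMonomial (lam : ℕ → R) (n : ℕ) (x z : R) :
    ∑ k ∈ range (2 * n + 3), lam k * (polarMonomial x k).eval z
      = 2 * lam (2 * n + 2) * x ^ (n + 1) * z ^ (n + 1)
        + ∑ j ∈ range (n + 1), x ^ j * z ^ j * (2 * lam (2 * j) + (x + z) * lam (2 * j + 1)) := by
  have hdiv : ∀ j, (2 * j + 1) / 2 = j := by omega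
  have hsub : ∀ j, 2 * j - j = j := by omega
  have hsub' : ∀ j, 2 * j + 1 - j = j + 1 := by omega
  rw [show 2 * n + 3 = 2 * (n + 1) + 1 by ring, sum_range_succ, sum_range_two_mul, add_comm]
  simp only [polarMonomial, eval_add, eval_mul, eval_C, eval_pow, eval_X, hdiv, hsub, hsub',
    Nat.mul_div_cancel_left _ two_pos]
  rw [mul_add_one 2 n]
  congr 1
  · ring
  · exact sum_congr rfl fun j _ => by ring

theorem eval_derivative_derivative_polarMonomial (x : R) (k : ℕ) :
    (derivative (derivative (polarMonomial x k))).eval x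
      = ((k / 2).descFactorial 2 + (k - k / 2).descFactorial 2 : ℕ) * x ^ (k - 2) := by
  have key : ∀ a b : ℕ, a + b = k →
      x ^ a * b.descFactorial 2 * x ^ (b - 2) = (b.descFactorial 2 : R) * x ^ (k - 2) := by
    intro a b hab
    rcases lt_or_ge b 2 with hb | hb
    · simp only [Nat.descFactorial_eq_zero_iff_lt.mpr hb, Nat.cast_zero, mul_zero, zero_mul]
    · rw [mul_comm (x ^ a), mul_assoc, ← pow_add]
      congr 2
      omega
  simp only [polarMonomial, derivative_add, eval_add, eval_derivative_derivative_C_mul_X_pow]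
  rw [key _ _ (by omega), key _ _ (by omega)]
  push_cast
  ring

end Polarization

section AntidiagCoeff

variable (K : Type*) [Field K]

/-- The paper's `Σ_{g;k}`. -/
def antidiagCoeff (g k : ℕ) : K :=
  ((Nat.choose (2 * g + 1) g : K) / (4 * (g : K) + 2)) *
    ((k : K) * (2 * (g : K) + 2 - (k : K)) / 2 + ((2 * (g : K) + 1) / 4) * ((-1 : K) ^ k - 1))

variable [CharZero K]

theorem antidiagCoeff_eq_zero {g k : ℕ} (hk : k = 0 ∨ k = 1 ∨ k = 2 * g + 1 ∨ k = 2 * g + 2) :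
    antidiagCoeff K g k = 0 := by
  rcases hk with rfl | rfl | rfl | rfl <;>
  · simp only [antidiagCoeff]
    push_cast [pow_succ, pow_mul]
    ring

theorem sum_Icc_antidiagCoeff_mul (g : ℕ) (h : ℕ → K) :
    ∑ k ∈ Icc 2 (2 * g), antidiagCoeff K g k * h k
      = ∑ k ∈ range (2 * g + 3), antidiagCoeff K g k * h k := by
  refine sum_subset (fun k hk => by simp only [mem_Icc, mem_range] at hk ⊢; omega) fun k hk hk' => ?_
  rw [antidiagCoeff_eq_zero K (by simp only [mem_Icc, mem_range] at hk hk'; omega), zero_mul]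

theorem two_mul_antidiagCoeff (g k : ℕ) :
    2 * antidiagCoeff K g k
      = (2 * g).choose (g + 1) * k.descFactorial 2
        - (2 * g + 1).choose g * ((k / 2).descFactorial 2 + (k - k / 2).descFactorial 2 : ℕ) := by
  have hchoose : ((2 * g).choose (g + 1) : K) * (2 * g + 1) = g * (2 * g + 1).choose g := by
    have h := Nat.choose_mul_succ_eq (2 * g) (g + 1)
    rw [Nat.choose_symm_half, show 2 * g + 1 - (g + 1) = g by omega] at h
    exact_mod_cast h.trans (mul_comm _ _)
  have h2g : (2 * g + 1 : K) ≠ 0 := by exact_mod_cast (Nat.succ_ne_zero (2 * g))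
  rw [← mul_div_cancel_right₀ (((2 * g).choose (g + 1) : ℕ) : K) h2g, hchoose, antidiagCoeff,
    show (4 * g + 2 : K) = 2 * (2 * g + 1) by ring]
  obtain ⟨j, rfl | rfl⟩ := Nat.even_or_odd' k
  · rw [Nat.mul_div_cancel_left _ two_pos, show 2 * j - j = j by omega]
    push_cast [Nat.cast_descFactorial_two, pow_mul]
    field_simp
    ring
  · rw [show (2 * j + 1) / 2 = j by omega, show 2 * j + 1 - j = j + 1 by omega]
    push_cast [Nat.cast_descFactorial_two, pow_succ, pow_mul]
    field_simp
    ring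

end AntidiagCoeff

theorem card_powersetCard_half (g : ℕ) :
    #(powersetCard (g + 1) (univ : Finset (Fin (2 * g + 2)))) = 2 * (2 * g + 1).choose g := by
  rw [card_powersetCard, card_univ, Fintype.card_fin, Nat.choose_succ_succ', Nat.choose_symm_half,
    ← two_mul]

section ResidualMatrix

variable {g : ℕ} {e : Fin (2 * g + 2) → ℂ} {lam : ℕ → ℂ}

theorem residual_polynomial_eq {F : ℂ → ℂ → ℂ}
    (hF : ∀ x z : ℂ, F x z = 2 * lam (2 * g + 2) * x ^ (g + 1) * z ^ (g + 1)
        + ∑ k ∈ range (g + 1), x ^ k * z ^ k * (2 * lam (2 * k) + (x + z) * lam (2 * k + 1)))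
    {L : Finset (Fin (2 * g + 2)) → Matrix (Fin g) (Fin g) ℂ}
    (hL : ∀ S ∈ powersetCard (g + 1) (univ : Finset (Fin (2 * g + 2))), ∀ x z : ℂ,
        (∏ i ∈ S, (x - e i)) * (∏ j ∈ Sᶜ, (z - e j))
          + (∏ i ∈ S, (z - e i)) * (∏ j ∈ Sᶜ, (x - e j)) - F x z
        = (x - z) ^ 2 * ∑ i, ∑ j, L S i j * x ^ (i : ℕ) * z ^ (j : ℕ)) (x : ℂ) :
    ∑ S ∈ powersetCard (g + 1) univ,
        (C (∏ i ∈ S, (x - e i)) * ∏ i ∈ Sᶜ, (X - C (e i))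
          + C (∏ i ∈ Sᶜ, (x - e i)) * ∏ i ∈ S, (X - C (e i)))
      - C (#(powersetCard (g + 1) (univ : Finset (Fin (2 * g + 2)))) : ℂ) *
          ∑ k ∈ range (2 * g + 3), C (lam k) * polarMonomial x k
      = (X - C x) ^ 2 *
          ∑ S ∈ powersetCard (g + 1) univ, ∑ i, ∑ j, C (L S i j * x ^ (i : ℕ)) * X ^ (j : ℕ) := by
  refine Polynomial.funext fun z => ?_
  have hpolar : ∑ k ∈ range (2 * g + 3), lam k * (polarMonomial x k).eval z = F x z := by
    rw [hF, sum_range_mul_eval_polarMonomial]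
  simp only [eval_sub, eval_mul, eval_pow, eval_C, eval_X, eval_finsetSum, eval_add, eval_prod,
    hpolar]
  rw [← nsmul_eq_mul, ← sum_const, ← sum_sub_distrib, mul_sum]
  refine sum_congr rfl fun S hS => ?_
  linear_combination hL S hS x z

theorem eval_derivative_derivative_residual
    (hlam : ∀ x : ℂ, ∏ m, (x - e m) = ∑ k ∈ range (2 * g + 3), lam k * x ^ k) (x : ℂ) :
    (derivative (derivative (∑ S ∈ powersetCard (g + 1) univ,
        (C (∏ i ∈ S, (x - e i)) * ∏ i ∈ Sᶜ, (X - C (e i))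
          + C (∏ i ∈ Sᶜ, (x - e i)) * ∏ i ∈ S, (X - C (e i)))
      - C (#(powersetCard (g + 1) (univ : Finset (Fin (2 * g + 2)))) : ℂ) *
          ∑ k ∈ range (2 * g + 3), C (lam k) * polarMonomial x k))).eval x
      = 4 * ∑ k ∈ range (2 * g + 3), antidiagCoeff ℂ g k * (lam k * x ^ (k - 2)) := by
  have hf : ∏ m, (X - C (e m)) = ∑ k ∈ range (2 * g + 3), C (lam k) * X ^ k :=
    Polynomial.funext fun z => by simpa [eval_prod, eval_finsetSum] using hlam z
  rw [derivative_sub, derivative_sub, eval_sub,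
    eval_derivative_derivative_sum_partition e (g + 1) (by simp only [Fintype.card_fin]; omega),
    hf, card_powersetCard_half, Nat.cast_mul, Nat.cast_ofNat]
  simp only [derivative_sum, eval_finsetSum, eval_derivative_derivative_C_mul_X_pow]
  simp only [Fintype.card_fin, derivative_C_mul, derivative_sum, eval_finsetSum, eval_mul, eval_C,
    eval_derivative_derivative_polarMonomial,
    show 2 * g + 2 - 2 = 2 * g by omega, show 2 * g + 2 - (g + 1) = g + 1 by omega, mul_sum,
    ← sum_sub_distrib]
  refine sum_congr rfl fun k _ => ?_
  linear_combination (-2 * lam k * x ^ (k - 2)) * two_mul_antidiagCoeff ℂ g k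

end ResidualMatrix

theorem antidiagonal_sum_eq_of_forall_eval {K ι : Type*} [CommRing K] [IsDomain K] [Infinite K] {m n : ℕ}
    (s : Finset ι) (M : ι → Matrix (Fin m) (Fin n) K) (c : ℕ → K) (N : ℕ)
    (h : ∀ x : K, ∑ S ∈ s, ∑ i : Fin m, ∑ j : Fin n, M S i j * x ^ ((i : ℕ) + (j : ℕ))
      = ∑ k ∈ Icc 2 N, c k * x ^ (k - 2)) {k : ℕ} (hk₂ : 2 ≤ k) (hk : k ≤ N) :
    ∑ S ∈ s, ∑ i : Fin m, ∑ j : Fin n, (if (i : ℕ) + (j : ℕ) + 2 = k then M S i j else 0) = c k := by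
  have hpoly : ∑ S ∈ s, ∑ i : Fin m, ∑ j : Fin n, C (M S i j) * X ^ ((i : ℕ) + (j : ℕ))
      = ∑ k ∈ Icc 2 N, C (c k) * X ^ (k - 2) :=
    Polynomial.funext fun x => by simpa [eval_finsetSum] using h x
  have hcoeff := congrArg (coeff · (k - 2)) hpoly
  simp only [finsetSum_coeff, coeff_C_mul, coeff_X_pow, mul_ite, mul_one, mul_zero] at hcoeff
  rw [sum_eq_single_of_mem k (mem_Icc.mpr ⟨hk₂, hk⟩)
    (fun b hb hbk => if_neg (by simp only [mem_Icc] at hb; omega)), if_pos rfl] at hcoeff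
  rw [← hcoeff]
  exact sum_congr rfl fun S _ => sum_congr rfl fun i _ => sum_congr rfl fun j _ =>
    if_congr (by omega) rfl rfl

theorem antidiagonal_sums_of_residual_matrix_general
    (g : ℕ) (e : Fin (2 * g + 2) → ℂ)
    (lam : ℕ → ℂ)
    (hlam : ∀ x : ℂ, ∏ m, (x - e m) = ∑ k ∈ Finset.range (2 * g + 3), lam k * x ^ k)
    (F : ℂ → ℂ → ℂ)
    (hF : ∀ x z : ℂ, F x z = 2 * lam (2 * g + 2) * x ^ (g + 1) * z ^ (g + 1)
        + ∑ k ∈ Finset.range (g + 1),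
            x ^ k * z ^ k * (2 * lam (2 * k) + (x + z) * lam (2 * k + 1)))
    (L : Finset (Fin (2 * g + 2)) → Matrix (Fin g) (Fin g) ℂ)
    (hL : ∀ S ∈ Finset.powersetCard (g + 1) (Finset.univ : Finset (Fin (2 * g + 2))),
        ∀ x z : ℂ,
        (∏ i ∈ S, (x - e i)) * (∏ j ∈ Sᶜ, (z - e j))
          + (∏ i ∈ S, (z - e i)) * (∏ j ∈ Sᶜ, (x - e j)) - F x z
        = (x - z) ^ 2 * ∑ i, ∑ j, L S i j * x ^ (i : ℕ) * z ^ (j : ℕ)) :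
    (∀ x : ℂ,
      ∑ S ∈ Finset.powersetCard (g + 1) (Finset.univ : Finset (Fin (2 * g + 2))),
          ∑ i, ∑ j, L S i j * x ^ ((i : ℕ) + (j : ℕ))
        = 2 * ∑ k ∈ Finset.Icc 2 (2 * g),
            ((Nat.choose (2 * g + 1) g : ℂ) / (4 * (g : ℂ) + 2)) *
              ((k : ℂ) * (2 * (g : ℂ) + 2 - (k : ℂ)) / 2
                + ((2 * (g : ℂ) + 1) / 4) * ((-1 : ℂ) ^ k - 1)) * lam k * x ^ (k - 2))
    ∧ (∀ k : ℕ, 2 ≤ k → k ≤ 2 * g →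
        (1 / 2 : ℂ) *
            ∑ S ∈ Finset.powersetCard (g + 1) (Finset.univ : Finset (Fin (2 * g + 2))),
              ∑ i : Fin g, ∑ j : Fin g, (if (i : ℕ) + (j : ℕ) + 2 = k then L S i j else 0)
          = ((Nat.choose (2 * g + 1) g : ℂ) / (4 * (g : ℂ) + 2)) *
              ((k : ℂ) * (2 * (g : ℂ) + 2 - (k : ℂ)) / 2
                + ((2 * (g : ℂ) + 1) / 4) * ((-1 : ℂ) ^ k - 1)) * lam k) := by
  have hsum : ∀ x : ℂ, ∑ S ∈ powersetCard (g + 1) univ, ∑ i, ∑ j, L S i j * x ^ ((i : ℕ) + (j : ℕ))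
      = 2 * ∑ k ∈ Icc 2 (2 * g), antidiagCoeff ℂ g k * lam k * x ^ (k - 2) := by
    intro x
    have h := congrArg (fun p => (derivative (derivative p)).eval x)
      (residual_polynomial_eq hF hL x)
    simp only [eval_derivative_derivative_residual hlam, eval_derivative_derivative_X_sub_C_sq_mul,
      eval_finsetSum, eval_mul, eval_C, eval_pow, eval_X, mul_assoc] at h
    simp only [mul_assoc, sum_Icc_antidiagCoeff_mul, pow_add]
    linear_combination -h / 2
  refine ⟨hsum, fun k hk₂ hk => ?_⟩
  rw [antidiagonal_sum_eq_of_forall_eval _ _ (fun k => 2 * (antidiagCoeff ℂ g k * lam k)) (2 * g)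
    (fun x => by rw [hsum, mul_sum]; simp only [mul_assoc]) hk₂ hk]
  simp only [antidiagCoeff]
  ring

/-- With `f(x) = ∏ (x − e_m) = ∑ λ_k x^k`, Kleinian 2-polar `F`, and for each
`(g+1)`-subset `S` the partition matrix `Λ^{[S]}` (symmetric, with
`P_S(x)P_{S^c}(z) + P_S(z)P_{S^c}(x) − F(x,z) = (x−z)² ∑ Λ^{[S]}_{ij} x^{i−1}z^{j−1}`),
one has `∑_S ∑_{i,j} Λ^{[S]}_{ij} x^{i+j−2} = 2 ∑_{k=2}^{2g} Σ_{g;k} λ_k x^{k−2}` with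
`Σ_{g;k} = (C(2g+1,g)/(4g+2))(k(2g+2−k)/2 + ((2g+1)/4)((−1)^k−1))`; equivalently every
`(k−1)`-th anti-diagonal sum of `Λ_g = (1/2)∑_S Λ^{[S]}` equals `Σ_{g;k} λ_k`. -/
theorem antidiagonal_sums_of_residual_matrix
    (g : ℕ) (hg : 1 ≤ g) (e : Fin (2 * g + 2) → ℂ)
    (lam : ℕ → ℂ)
    (hlam : ∀ x : ℂ, ∏ m, (x - e m) = ∑ k ∈ Finset.range (2 * g + 3), lam k * x ^ k)
    (F : ℂ → ℂ → ℂ)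
    (hF : ∀ x z : ℂ, F x z = 2 * lam (2 * g + 2) * x ^ (g + 1) * z ^ (g + 1)
        + ∑ k ∈ Finset.range (g + 1),
            x ^ k * z ^ k * (2 * lam (2 * k) + (x + z) * lam (2 * k + 1)))
    (L : Finset (Fin (2 * g + 2)) → Matrix (Fin g) (Fin g) ℂ)
    (hLsymm : ∀ S ∈ Finset.powersetCard (g + 1) (Finset.univ : Finset (Fin (2 * g + 2))),
        (L S).IsSymm)
    (hL : ∀ S ∈ Finset.powersetCard (g + 1) (Finset.univ : Finset (Fin (2 * g + 2))),
        ∀ x z : ℂ,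
        (∏ i ∈ S, (x - e i)) * (∏ j ∈ Sᶜ, (z - e j))
          + (∏ i ∈ S, (z - e i)) * (∏ j ∈ Sᶜ, (x - e j)) - F x z
        = (x - z) ^ 2 * ∑ i, ∑ j, L S i j * x ^ (i : ℕ) * z ^ (j : ℕ)) :
    (∀ x : ℂ,
      ∑ S ∈ Finset.powersetCard (g + 1) (Finset.univ : Finset (Fin (2 * g + 2))),
          ∑ i, ∑ j, L S i j * x ^ ((i : ℕ) + (j : ℕ))
        = 2 * ∑ k ∈ Finset.Icc 2 (2 * g),
            ((Nat.choose (2 * g + 1) g : ℂ) / (4 * (g : ℂ) + 2)) *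
              ((k : ℂ) * (2 * (g : ℂ) + 2 - (k : ℂ)) / 2
                + ((2 * (g : ℂ) + 1) / 4) * ((-1 : ℂ) ^ k - 1)) * lam k * x ^ (k - 2))
    ∧ (∀ k : ℕ, 2 ≤ k → k ≤ 2 * g →
        (1 / 2 : ℂ) *
            ∑ S ∈ Finset.powersetCard (g + 1) (Finset.univ : Finset (Fin (2 * g + 2))),
              ∑ i : Fin g, ∑ j : Fin g, (if (i : ℕ) + (j : ℕ) + 2 = k then L S i j else 0)
          = ((Nat.choose (2 * g + 1) g : ℂ) / (4 * (g : ℂ) + 2)) *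
              ((k : ℂ) * (2 * (g : ℂ) + 2 - (k : ℂ)) / 2
                + ((2 * (g : ℂ) + 1) / 4) * ((-1 : ℂ) ^ k - 1)) * lam k) :=
  antidiagonal_sums_of_residual_matrix_general g e lam hlam F hF L hL
end

section
/- For every integer g ≥ 1 and every integer k with 2 ≤ k ≤ 2g, the rational number Σ_{g;k} = (C(2g+1,g)/(4g+2)) · ( k(2g+2−k)/2 + ((2g+1)/4)((−1)^k − 1) ) is an integer, and moreover Σ_{g;k} = Σ_{g;2g+2−k}. -/
/-- The coefficient `Σ_{g;k} = (C(2g+1,g)/(4g+2)) · ( k(2g+2−k)/2 + ((2g+1)/4)((−1)^k − 1) )`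
of the `(k−1)`-th anti-diagonal sum of the residual matrix `Λ_g`. -/
def SigmaCoeff (g k : ℕ) : ℚ :=
  ((Nat.choose (2 * g + 1) g : ℚ) / (4 * (g : ℚ) + 2)) *
    ((k : ℚ) * (2 * (g : ℚ) + 2 - (k : ℚ)) / 2
      + ((2 * (g : ℚ) + 1) / 4) * ((-1 : ℚ) ^ k - 1))

lemma choose_eq_catalan (g : ℕ) :
    ((2 * g + 1).choose g : ℚ) = (catalan g : ℚ) * (2 * (g : ℚ) + 1) := by
  have h1 : (2 * g + 1) * Nat.choose (2 * g) g = Nat.choose (2 * g + 1) (g + 1) * (g + 1) :=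
    Nat.add_one_mul_choose_eq (2 * g) g
  have h2 : Nat.choose (2 * g + 1) (g + 1) = Nat.choose (2 * g + 1) g :=
    Nat.choose_symm_half g
  have h3 : (g + 1) * catalan g = Nat.choose (2 * g) g := by
    rw [succ_mul_catalan_eq_centralBinom]; rfl
  have key : Nat.choose (2 * g + 1) g * (g + 1) = (2 * g + 1) * ((g + 1) * catalan g) := by
    rw [h3, h1, h2]
  have key' : Nat.choose (2 * g + 1) g = (2 * g + 1) * catalan g :=
    Nat.eq_of_mul_eq_mul_right (Nat.succ_pos g) (by rw [key, Nat.succ_eq_add_one]; ring)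
  have := congrArg (fun n : ℕ => (n : ℚ)) key'
  push_cast at this
  linarith [this]

/-- For every `g ≥ 1` and `2 ≤ k ≤ 2g`, the rational number `Σ_{g;k}` is an
integer and `Σ_{g;k} = Σ_{g;2g+2−k}`. -/
theorem sigmaCoeff_integer_and_symmetric
    (g k : ℕ) (hg : 1 ≤ g) (hk2 : 2 ≤ k) (hk : k ≤ 2 * g) :
    (∃ n : ℤ, SigmaCoeff g k = (n : ℚ)) ∧ SigmaCoeff g k = SigmaCoeff g (2 * g + 2 - k) := by
  have hcast : ((2 * g + 2 - k : ℕ) : ℚ) = 2 * (g : ℚ) + 2 - (k : ℚ) := by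
    rw [Nat.cast_sub (by omega)]; push_cast; ring
  have hg0 : (2 * (g : ℚ) + 1) ≠ 0 := by positivity
  rcases Nat.even_or_odd k with he | ho
  · obtain ⟨m, hm⟩ := he
    have hmk : k = 2 * m := by omega
    have hpow : (-1 : ℚ) ^ k = 1 := by rw [hmk]; simp [pow_mul]
    have hpow' : (-1 : ℚ) ^ (2 * g + 2 - k) = 1 := by
      have : 2 * g + 2 - k = 2 * (g + 1 - m) := by omega
      rw [this]; simp [pow_mul]
    constructor
    · refine ⟨(catalan g : ℤ) * m * (g + 1 - m), ?_⟩
      have hm' : ((m : ℤ) ≤ (g : ℤ) + 1) := by omega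
      unfold SigmaCoeff
      rw [choose_eq_catalan, hpow, hmk]
      push_cast
      field_simp
      ring
    · unfold SigmaCoeff
      rw [hpow, hpow', hcast]
      ring
  · obtain ⟨m, hm⟩ := ho
    have hpow : (-1 : ℚ) ^ k = -1 := by rw [hm]; simp [pow_add, pow_mul]
    have hpow' : (-1 : ℚ) ^ (2 * g + 2 - k) = -1 := by
      have : 2 * g + 2 - k = 2 * (g - m) + 1 := by omega
      rw [this]; simp [pow_add, pow_mul]
    constructor
    · refine ⟨(catalan g : ℤ) * m * (g - m), ?_⟩
      unfold SigmaCoeff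
      rw [choose_eq_catalan, hpow, hm]
      push_cast
      field_simp
      ring
    · unfold SigmaCoeff
      rw [hpow, hpow', hcast]
      ring
end

section
/- Let g ≥ 1, let e_1, …, e_{2g+2} ∈ ℂ, let f(x) = ∏_{m=1}^{2g+2}(x − e_m) = ∑_{k=0}^{2g+2} λ_k x^k, and let F(x,z) be the Kleinian 2-polar of f. Then for all indices i ≠ j in {1, …, 2g+2}: F(e_i, e_j) = −(e_i − e_j)² · ∑_{n=0}^{g} e_i^n e_j^n S^{(i,j)}_{2g−2n}, where S^{(i,j)}_k denotes the elementary symmetric polynomial of degree k in the 2g numbers e_m with m ∈ {1,…,2g+2} \ {i, j} (and S^{(i,j)}_0 = 1). -/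
open Finset Polynomial

/-- The elementary symmetric function of degree `k` in the values `e i`, `i ∈ T`. -/
noncomputable def esymOn {n : ℕ} (T : Finset (Fin n)) (k : ℕ) (e : Fin n → ℂ) : ℂ :=
  ∑ A ∈ Finset.powersetCard k T, ∏ i ∈ A, e i

lemma sumlemma (σ π : ℂ) (μ : ℕ → ℂ) (lam : ℕ → ℂ)
    (h : ∀ k, lam k = (if 2 ≤ k then μ (k-2) else 0) - σ * (if 1 ≤ k then μ (k-1) else 0)
        + π * μ k) :
    ∀ N : ℕ, ∑ k ∈ Finset.range (N+1), π ^ k * (2 * lam (2*k) + σ * lam (2*k+1))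
      = (4*π - σ^2) * ∑ n ∈ Finset.range (N+1), π ^ n * μ (2*n)
        - 2 * π ^ (N+1) * μ (2*N) + σ * π ^ (N+1) * μ (2*N+1) := by
  intro N
  induction N with
  | zero => simp [h 0, h 1]; ring
  | succ N ih =>
      rw [Finset.sum_range_succ, ih, h (2*(N+1)), h (2*(N+1)+1)]
      rw [Finset.sum_range_succ (n := N+1)]
      have h1 : (2 : ℕ) ≤ 2*(N+1) := by omega
      have h2 : (1 : ℕ) ≤ 2*(N+1) := by omega
      have h3 : (2 : ℕ) ≤ 2*(N+1)+1 := by omega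
      have h4 : (1 : ℕ) ≤ 2*(N+1)+1 := by omega
      rw [if_pos h1, if_pos h2, if_pos h3, if_pos h4]
      have e1 : 2*(N+1) - 2 = 2*N := by omega
      have e2 : 2*(N+1) - 1 = 2*N+1 := by omega
      have e3 : 2*(N+1)+1 - 2 = 2*N+1 := by omega
      have e4 : 2*(N+1)+1 - 1 = 2*(N+1) := by omega
      rw [e1, e2, e3, e4]
      ring

/-- For `f(x) = ∏_{m=1}^{2g+2}(x − e_m) = ∑ λ_k x^k` with Kleinian 2-polar
`F(x,z)`, and indices `i ≠ j`,
`F(e_i, e_j) = −(e_i − e_j)² ∑_{n=0}^{g} e_i^n e_j^n S^{(i,j)}_{2g−2n}`,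
where `S^{(i,j)}_k` is the elementary symmetric polynomial of degree `k` in the `e_m`,
`m ∉ {i, j}`. -/
theorem kleinian_polar_at_branch_points
    (g : ℕ) (hg : 1 ≤ g) (e : Fin (2 * g + 2) → ℂ)
    (lam : ℕ → ℂ)
    (hlam : ∀ x : ℂ, ∏ m, (x - e m) = ∑ k ∈ Finset.range (2 * g + 3), lam k * x ^ k)
    (F : ℂ → ℂ → ℂ)
    (hF : ∀ x z : ℂ, F x z = 2 * lam (2 * g + 2) * x ^ (g + 1) * z ^ (g + 1)
        + ∑ k ∈ Finset.range (g + 1),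
            x ^ k * z ^ k * (2 * lam (2 * k) + (x + z) * lam (2 * k + 1)))
    (i j : Fin (2 * g + 2)) (hij : i ≠ j) :
    F (e i) (e j)
      = -(e i - e j) ^ 2 *
          ∑ n ∈ Finset.range (g + 1),
            (e i) ^ n * (e j) ^ n * esymOn ({i, j} : Finset (Fin (2 * g + 2)))ᶜ (2 * g - 2 * n) e := by
  set a := e i with ha
  set b := e j with hb
  set T : Finset (Fin (2*g+2)) := {i, j} with hT
  set H : Polynomial ℂ := ∏ m ∈ Tᶜ, (X - C (e m)) with hH
  set μ : ℕ → ℂ := fun k => H.coeff k with hμ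
  set P : Polynomial ℂ := ∏ m, (X - C (e m)) with hP
  -- cardinality of the complement
  have hcardT : T.card = 2 := Finset.card_pair hij
  have hcard : Tᶜ.card = 2*g := by
    rw [Finset.card_compl, hcardT]
    simp
  -- μ vanishes above 2g
  have hμzero : ∀ k, 2*g < k → μ k = 0 := by
    intro k hk
    apply Polynomial.coeff_eq_zero_of_natDegree_lt
    have hdeg : H.natDegree ≤ 2*g := by
      rw [hH]
      refine le_trans (Polynomial.natDegree_prod_le Tᶜ (fun m => X - C (e m))) ?_
      refine le_trans (Finset.sum_le_sum (f := fun m => (X - C (e m)).natDegree)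
        (g := fun _ => 1) (fun m _ => le_of_eq (natDegree_X_sub_C (e m)))) ?_
      rw [Finset.sum_const, smul_eq_mul, mul_one, hcard]
    omega
  -- Vieta: μ (2n) = esymOn Tᶜ (2g - 2n) e for n ≤ g
  have hvieta : ∀ n : ℕ, n ≤ g → μ (2*n) = esymOn Tᶜ (2*g - 2*n) e := by
    intro n hn
    have hX : ∀ m : Fin (2*g+2), X - C (e m) = X + C (-(e m)) := by
      intro m; rw [map_neg, sub_eq_add_neg]
    have hk : 2*n ≤ Tᶜ.card := by omega
    rw [hμ]
    simp only [hH, hX]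
    rw [Finset.prod_X_add_C_coeff _ _ hk, hcard]
    rw [esymOn]
    apply Finset.sum_congr rfl
    intro t ht
    have htc : t.card = 2*g - 2*n := (Finset.mem_powersetCard.mp ht).2
    have : ∏ i ∈ t, -e i = (-1)^t.card * ∏ i ∈ t, e i := by
      rw [← Finset.prod_const, ← Finset.prod_mul_distrib]
      exact Finset.prod_congr rfl (fun i _ => (neg_one_mul _).symm)
    rw [this, htc]
    have hev : Even (2*g - 2*n) := ⟨g - n, by omega⟩
    rw [hev.neg_one_pow, one_mul]
  -- factorization of P
  have hfact : P = (X^2 - C (a+b) * X^1 + C (a*b)) * H := by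
    have h1 : P = (∏ m ∈ T, (X - C (e m))) * H := by
      rw [hP, hH, Finset.prod_mul_prod_compl]
    rw [h1, hT, Finset.prod_pair hij]
    rw [map_add, map_mul]
    ring
  -- coefficients of P
  have hPcoeff : ∀ k, P.coeff k = (if 2 ≤ k then μ (k-2) else 0)
      - (a+b) * (if 1 ≤ k then μ (k-1) else 0) + (a*b) * μ k := by
    intro k
    have : P = H * X^2 - C (a+b) * (H * X^1) + C (a*b) * H := by rw [hfact]; ring
    rw [this, Polynomial.coeff_add, Polynomial.coeff_sub, Polynomial.coeff_C_mul,
      Polynomial.coeff_C_mul, Polynomial.coeff_mul_X_pow', Polynomial.coeff_mul_X_pow']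
  -- lam equals coefficients of P
  have hlamP : ∀ k, k < 2*g+3 → lam k = P.coeff k := by
    have hPQ : P = ∑ k ∈ Finset.range (2*g+3), C (lam k) * X ^ k := by
      apply Polynomial.funext
      intro x
      rw [hP]
      simp only [Polynomial.eval_prod, Polynomial.eval_sub, Polynomial.eval_X,
        Polynomial.eval_C, Polynomial.eval_finset_sum, Polynomial.eval_mul,
        Polynomial.eval_pow]
      exact hlam x
    intro k hk
    rw [hPQ, Polynomial.finset_sum_coeff]
    simp only [Polynomial.coeff_C_mul, Polynomial.coeff_X_pow, mul_ite, mul_one, mul_zero]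
    rw [Finset.sum_ite_eq (Finset.range (2*g+3)) k lam]
    rw [if_pos (Finset.mem_range.mpr hk)]
  -- the convolution form of lam
  set lam' : ℕ → ℂ := fun k => (if 2 ≤ k then μ (k-2) else 0)
      - (a+b) * (if 1 ≤ k then μ (k-1) else 0) + (a*b) * μ k with hlam'
  have hlamlam' : ∀ k, k < 2*g+3 → lam k = lam' k := by
    intro k hk; rw [hlamP k hk, hlam', hPcoeff k]
  -- compute top coefficient
  have htop : lam (2*g+2) = μ (2*g) := by
    rw [hlamlam' (2*g+2) (by omega)]
    simp only [hlam']
    rw [if_pos (by omega : (2:ℕ) ≤ 2*g+2), if_pos (by omega : (1:ℕ) ≤ 2*g+2)]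
    have e1 : 2*g+2-2 = 2*g := by omega
    have e2 : 2*g+2-1 = 2*g+1 := by omega
    rw [e1, e2, hμzero (2*g+1) (by omega), hμzero (2*g+2) (by omega)]
    ring
  -- main computation
  rw [hF, htop]
  have hsum : ∑ k ∈ Finset.range (g + 1),
      a ^ k * b ^ k * (2 * lam (2 * k) + (a + b) * lam (2 * k + 1))
      = ∑ k ∈ Finset.range (g+1), (a*b) ^ k * (2 * lam' (2*k) + (a+b) * lam' (2*k+1)) := by
    apply Finset.sum_congr rfl
    intro k hk
    have hk' : k ≤ g := by have := Finset.mem_range.mp hk; omega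
    rw [hlamlam' (2*k) (by omega), hlamlam' (2*k+1) (by omega), mul_pow]
  rw [hsum, sumlemma (a+b) (a*b) μ lam' (fun k => rfl) g]
  rw [hμzero (2*g+1) (by omega)]
  have hE : ∑ n ∈ Finset.range (g + 1),
      a ^ n * b ^ n * esymOn Tᶜ (2 * g - 2 * n) e
      = ∑ n ∈ Finset.range (g+1), (a*b) ^ n * μ (2*n) := by
    apply Finset.sum_congr rfl
    intro n hn
    have hn' : n ≤ g := by have := Finset.mem_range.mp hn; omega
    rw [hvieta n hn', mul_pow]
  rw [hE]
  ring
end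

section
/- Let g ≥ 1, let e_1, …, e_{2g+2} ∈ ℂ, let f(x) = ∏_{m=1}^{2g+2}(x − e_m) = ∑_{k=0}^{2g+2} λ_k x^k with Kleinian 2-polar F(x,z), let S be a (g+1)-element subset of {1,…,2g+2}, and let Λ be a symmetric g×g complex matrix satisfying P_S(x)P_{S^c}(z) + P_S(z)P_{S^c}(x) − F(x,z) = (x−z)² ∑_{a,b=1}^{g} Λ_{ab} x^{a−1} z^{b−1}. Then for all i ≠ j in S with e_i ≠ e_j, writing X_i = (1, e_i, …, e_i^{g−1})^T: X_i^T Λ X_j = −F(e_i, e_j)/(e_i − e_j)² = ∑_{n=0}^{g} e_i^n e_j^n S^{(i,j)}_{2g−2n}, where S^{(i,j)}_k is the elementary symmetric polynomial of degree k in the numbers e_m, m ∉ {i, j}. -/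
open Finset

/-- Proposition 6.1 of the paper: with `f(x) = ∏(x − e_m) = ∑ λ_k x^k`,
Kleinian 2-polar `F`, a `(g+1)`-subset `S` and a symmetric matrix `Λ` satisfying the
2-polar quotient identity, for all `i ≠ j ∈ S` with `e_i ≠ e_j` and
`X_i = (1, e_i, …, e_i^{g−1})ᵀ`:
`X_iᵀ Λ X_j = −F(e_i,e_j)/(e_i−e_j)² = ∑_{n=0}^{g} e_i^n e_j^n S^{(i,j)}_{2g−2n}`. -/
theorem partition_matrix_quadratic_form_at_branch_points
    (g : ℕ) (hg : 1 ≤ g) (e : Fin (2 * g + 2) → ℂ)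
    (lam : ℕ → ℂ)
    (hlam : ∀ x : ℂ, ∏ m, (x - e m) = ∑ k ∈ Finset.range (2 * g + 3), lam k * x ^ k)
    (F : ℂ → ℂ → ℂ)
    (hF : ∀ x z : ℂ, F x z = 2 * lam (2 * g + 2) * x ^ (g + 1) * z ^ (g + 1)
        + ∑ k ∈ Finset.range (g + 1),
            x ^ k * z ^ k * (2 * lam (2 * k) + (x + z) * lam (2 * k + 1)))
    (S : Finset (Fin (2 * g + 2))) (hS : S.card = g + 1)
    (Λ : Matrix (Fin g) (Fin g) ℂ) (hΛsymm : Λ.IsSymm)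
    (hΛ : ∀ x z : ℂ,
        (∏ i ∈ S, (x - e i)) * (∏ j ∈ Sᶜ, (z - e j))
          + (∏ i ∈ S, (z - e i)) * (∏ j ∈ Sᶜ, (x - e j)) - F x z
        = (x - z) ^ 2 * ∑ a, ∑ b, Λ a b * x ^ (a : ℕ) * z ^ (b : ℕ))
    (i j : Fin (2 * g + 2)) (hiS : i ∈ S) (hjS : j ∈ S) (hij : i ≠ j)
    (he : e i ≠ e j) :
    (∑ a, ∑ b, Λ a b * (e i) ^ (a : ℕ) * (e j) ^ (b : ℕ))
        = -F (e i) (e j) / (e i - e j) ^ 2 ∧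
      -F (e i) (e j) / (e i - e j) ^ 2
        = ∑ n ∈ Finset.range (g + 1),
            (e i) ^ n * (e j) ^ n * esymOn ({i, j} : Finset (Fin (2 * g + 2)))ᶜ (2 * g - 2 * n) e := by
  classical
  have hne : (e i - e j) ^ 2 ≠ 0 := pow_ne_zero _ (sub_ne_zero.mpr he)
  constructor
  · have h1 := hΛ (e i) (e j)
    have hpi : (∏ m ∈ S, (e i - e m)) = 0 := Finset.prod_eq_zero hiS (sub_self (e i))
    have hpj : (∏ m ∈ S, (e j - e m)) = 0 := Finset.prod_eq_zero hjS (sub_self (e j))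
    rw [hpi, hpj] at h1
    rw [eq_div_iff hne]
    linear_combination -h1
  · -- Part 2
    open Polynomial in
    set T : Finset (Fin (2 * g + 2)) := ({i, j} : Finset (Fin (2 * g + 2)))ᶜ with hT
    set p : Polynomial ℂ := ∏ m ∈ T, (X - C (e m)) with hp
    have hTcard : T.card = 2 * g := by
      rw [hT, Finset.card_compl, Finset.card_pair hij]
      simp only [Finset.card_univ, Fintype.card_fin]
      omega
    have hmon : p.Monic := monic_prod_of_monic _ _ fun m _ => monic_X_sub_C (e m)
    have hdeg : p.natDegree = 2 * g := by
      rw [hp, natDegree_prod_of_monic _ _ fun m _ => monic_X_sub_C (e m)]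
      simp [hTcard]
    have hctop : p.coeff (2 * g) = 1 := by
      have h := hmon.coeff_natDegree
      rwa [hdeg] at h
    have hczero : ∀ k, 2 * g < k → p.coeff k = 0 := fun k hk =>
      coeff_eq_zero_of_natDegree_lt (by rw [hdeg]; exact hk)
    have hPfact : (∏ m : Fin (2 * g + 2), (X - C (e m)))
        = (X - C (e i)) * (X - C (e j)) * p := by
      rw [hp, hT, ← Finset.prod_mul_prod_compl ({i, j} : Finset (Fin (2 * g + 2)))
        (fun m => X - C (e m)), Finset.prod_pair hij]
    have hPQ : (∏ m : Fin (2 * g + 2), (X - C (e m)))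
        = ∑ k ∈ Finset.range (2 * g + 3), C (lam k) * X ^ k := by
      apply Polynomial.funext
      intro x
      rw [Polynomial.eval_prod, Polynomial.eval_finset_sum]
      simpa using hlam x
    have hlamc : ∀ k, k < 2 * g + 3 →
        lam k = ((X - C (e i)) * (X - C (e j)) * p).coeff k := by
      intro k hk
      rw [← hPfact, hPQ, Polynomial.finset_sum_coeff]
      simp [Polynomial.coeff_C_mul, Polynomial.coeff_X_pow, hk]
    have hcoeff : ∀ m : ℕ, ((X - C (e i)) * (X - C (e j)) * p).coeff m
        = (if 2 ≤ m then p.coeff (m - 2) else 0)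
          - (e i + e j) * (if 1 ≤ m then p.coeff (m - 1) else 0)
          + (e i * e j) * p.coeff m := by
      intro m
      have h2 : (X - C (e i)) * (X - C (e j)) * p
          = p * X ^ 2 - C (e i + e j) * (p * X ^ 1) + C (e i * e j) * p := by
        simp only [map_add, map_mul]
        ring
      rw [h2]
      simp only [Polynomial.coeff_add, Polynomial.coeff_sub, Polynomial.coeff_C_mul,
        Polynomial.coeff_mul_X_pow']
    have hesym : ∀ n : ℕ, n ≤ g → esymOn T (2 * g - 2 * n) e = p.coeff (2 * n) := by
      intro n hn
      have hps : p = ∏ m ∈ T, (X + C (-(e m))) := by simp [hp, sub_eq_add_neg]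
      have hk : 2 * n ≤ T.card := by rw [hTcard]; omega
      rw [hps, Finset.prod_X_add_C_coeff T _ hk, hTcard, esymOn]
      have hone : ((-1 : ℂ)) ^ (2 * g - 2 * n) = 1 := by
        have h2 : 2 * g - 2 * n = 2 * (g - n) := by omega
        rw [h2, pow_mul]
        norm_num
      refine Finset.sum_congr rfl fun t ht => ?_
      have htc : t.card = 2 * g - 2 * n := (Finset.mem_powersetCard.mp ht).2
      calc ∏ m ∈ t, e m = ((-1 : ℂ)) ^ (2 * g - 2 * n) * ∏ m ∈ t, e m := by
            rw [hone, one_mul]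
        _ = (-1 : ℂ) ^ t.card * ∏ m ∈ t, e m := by rw [htc]
        _ = ∏ m ∈ t, (-1 : ℂ) * e m := by
            rw [Finset.prod_mul_distrib, Finset.prod_const]
        _ = ∏ m ∈ t, -(e m) := by
            simp [neg_one_mul]
    -- the telescoping helper
    set a : ℕ → ℂ := fun k =>
      if k = 0 then 0 else (e i * e j) ^ k * p.coeff (2 * k - 1) with ha
    have hterm : ∀ k ∈ Finset.range (g + 1),
        e i ^ k * e j ^ k * (2 * lam (2 * k) + (e i + e j) * lam (2 * k + 1))
        = (2 * (e i * e j) - (e i + e j) ^ 2) * ((e i * e j) ^ k * p.coeff (2 * k))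
          + 2 * (if k = 0 then 0 else (e i * e j) ^ k * p.coeff (2 * k - 2))
          + (e i + e j) * (a (k + 1) - a k) := by
      intro k hk
      have hk' : k ≤ g := Nat.lt_succ_iff.mp (Finset.mem_range.mp hk)
      rw [hlamc (2 * k) (by omega), hlamc (2 * k + 1) (by omega), hcoeff, hcoeff]
      obtain _ | n := k
      · simp only [ha, if_pos rfl, if_neg (Nat.succ_ne_zero 0)]
        norm_num
        ring
      · have e1 : 2 * (n + 1) - 2 = 2 * n := by omega
        have e2 : 2 * (n + 1) - 1 = 2 * n + 1 := by omega
        have e3 : 2 * (n + 1) + 1 - 2 = 2 * n + 1 := by omega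
        have e4 : 2 * (n + 1) + 1 - 1 = 2 * (n + 1) := by omega
        have e5 : 2 * (n + 1 + 1) - 1 = 2 * (n + 1) + 1 := by omega
        simp only [ha, if_neg (Nat.succ_ne_zero _), if_pos (by omega : 2 ≤ 2 * (n + 1)),
          if_pos (by omega : 1 ≤ 2 * (n + 1)), if_pos (by omega : 2 ≤ 2 * (n + 1) + 1),
          if_pos (by omega : 1 ≤ 2 * (n + 1) + 1), e1, e2, e3, e4, e5]
        ring
    rw [div_eq_iff hne]
    have hRHS : ∑ n ∈ Finset.range (g + 1),
        e i ^ n * e j ^ n * esymOn T (2 * g - 2 * n) e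
        = (∑ n ∈ Finset.range g, (e i * e j) ^ n * p.coeff (2 * n))
          + (e i * e j) ^ g := by
      rw [Finset.sum_range_succ]
      have h1 : ∀ n ∈ Finset.range g,
          e i ^ n * e j ^ n * esymOn T (2 * g - 2 * n) e
          = (e i * e j) ^ n * p.coeff (2 * n) := by
        intro n hn
        rw [hesym n (le_of_lt (Finset.mem_range.mp hn)), mul_pow]
      rw [Finset.sum_congr rfl h1, hesym g le_rfl, hctop, mul_pow]
      ring
    rw [hRHS, hF, Finset.sum_congr rfl hterm, hlamc (2 * g + 2) (by omega), hcoeff]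
    rw [Finset.sum_add_distrib, Finset.sum_add_distrib, ← Finset.mul_sum, ← Finset.mul_sum,
      ← Finset.mul_sum, Finset.sum_range_sub a]
    have hshift : (∑ k ∈ Finset.range (g + 1),
        (if k = 0 then (0:ℂ) else (e i * e j) ^ k * p.coeff (2 * k - 2)))
        = (e i * e j) * ∑ k ∈ Finset.range g, (e i * e j) ^ k * p.coeff (2 * k) := by
      rw [Finset.sum_range_succ']
      have h0 : (if (0:ℕ) = 0 then (0:ℂ) else (e i * e j) ^ 0 * p.coeff (2 * 0 - 2)) = 0 :=
        if_pos rfl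
      rw [h0, add_zero, Finset.mul_sum]
      refine Finset.sum_congr rfl fun k hk => ?_
      rw [if_neg (Nat.succ_ne_zero k), show 2 * (k + 1) - 2 = 2 * k by omega]
      ring
    have hE : (∑ k ∈ Finset.range (g + 1), (e i * e j) ^ k * p.coeff (2 * k))
        = (∑ k ∈ Finset.range g, (e i * e j) ^ k * p.coeff (2 * k)) + (e i * e j) ^ g := by
      rw [Finset.sum_range_succ, hctop, mul_one]
    have ha0 : a 0 = 0 := by simp [ha]
    have hag : a (g + 1) = 0 := by
      have e1 : 2 * (g + 1) - 1 = 2 * g + 1 := by omega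
      simp only [ha, if_neg (Nat.succ_ne_zero _), e1, hczero (2 * g + 1) (by omega), mul_zero]
    rw [hshift, hE, ha0, hag]
    rw [if_pos (by omega : 2 ≤ 2 * g + 2), if_pos (by omega : 1 ≤ 2 * g + 2),
      show 2 * g + 2 - 2 = 2 * g by omega, show 2 * g + 2 - 1 = 2 * g + 1 by omega,
      hctop, hczero (2 * g + 1) (by omega), hczero (2 * g + 2) (by omega)]
    ring
end

section
/- Let g ≥ 2 and let a_1, …, a_{g+1} ∈ ℂ. Let n = g(g+1)/2 and let M be the n×n matrix whose rows are indexed by the pairs (r,s) with 1 ≤ r < s ≤ g+1 and whose columns are indexed by the pairs (i,j) with 1 ≤ i ≤ j ≤ g (both in lexicographic order), with entries M_{(r,s),(i,j)} = a_r^{i−1} a_s^{j−1} + a_r^{j−1} a_s^{i−1} for i < j and M_{(r,s),(i,i)} = a_r^{i−1} a_s^{i−1}. Then there is a sign ε_g ∈ {+1, −1}, depending only on g, such that det M = ε_g · ∏_{1 ≤ r < s ≤ g+1} (a_r − a_s)^{g−1} for all choices of a_1, …, a_{g+1}. In particular det M ≠ 0 whenever the a_r are pairwise distinct. -/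
/-!
Let `V = (a_r ^ k)` be the Vandermonde matrix and `C` its second compound matrix,
`C (r, s) (k, l) = a_r ^ k a_s ^ l - a_r ^ l a_s ^ k`. Multiplying the row `(r, s)` of `M` by
`a_s - a_r` gives `C (r, s) (i, j + 1) - C (r, s) (i + 1, j)` (exponents counted from `0`), so
`D M = C T` with `D` diagonal, `det D = det V`, and `T` an integer matrix. After the column
shift `(i, j) ↦ (i, j + 1)`, `T` is block triangular with identity diagonal blocks, so
`det T = ±1` for any ordering of the columns. By Sylvester–Franke, `det C = (det V) ^ g`, hence
`det M = ± (det V) ^ (g - 1)`. The identity is proved for indeterminates `a_r`, where `det V ≠ 0`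
can be cancelled, and then specialised.
-/

open Finset

/-- The coefficient matrix of the linear system of Proposition 6.2: rows are indexed by
pairs `(r,s)` with `r < s` in `Fin (g+1)`, columns by pairs `(i,j)` with `i ≤ j` in `Fin g`
(so that `i−1, j−1` are the exponents); the entry is
`a_r^{i−1} a_s^{j−1} + a_r^{j−1} a_s^{i−1}` for `i < j` and `a_r^{i−1} a_s^{i−1}` for
`i = j`. -/
noncomputable def pairCoeffMatrix (g : ℕ) (a : Fin (g + 1) → ℂ)
    (rs : {p : Fin (g + 1) × Fin (g + 1) // p.1 < p.2})
    (ij : {p : Fin g × Fin g // p.1 ≤ p.2}) : ℂ :=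
  if ij.1.1 = ij.1.2 then
    a rs.1.1 ^ (ij.1.1 : ℕ) * a rs.1.2 ^ (ij.1.1 : ℕ)
  else
    a rs.1.1 ^ (ij.1.1 : ℕ) * a rs.1.2 ^ (ij.1.2 : ℕ)
      + a rs.1.1 ^ (ij.1.2 : ℕ) * a rs.1.2 ^ (ij.1.1 : ℕ)

open Matrix

abbrev LtPairs (n : Type*) [LT n] := {p : n × n // p.1 < p.2}

abbrev LePairs (n : Type*) [LE n] := {p : n × n // p.1 ≤ p.2}

section Pairs

variable {n M : Type*} [Fintype n] [LinearOrder n] [CommMonoid M]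

@[to_additive]
theorem prod_ltPairs_eq_prod_filter (f : n × n → M) :
    ∏ p : LtPairs n, f p.1 = ∏ x : n × n with x.1 < x.2, f x :=
  (prod_subtype {x : n × n | x.1 < x.2} (p := fun x => x.1 < x.2) (by simp) f).symm

theorem prod_ltPairs_eq_prod_prod_Ioi [LocallyFiniteOrderTop n] (f : n → n → M) :
    ∏ p : LtPairs n, f p.1.1 p.1.2 = ∏ i, ∏ j ∈ Ioi i, f i j := by
  rw [prod_ltPairs_eq_prod_filter fun x => f x.1 x.2]
  exact prod_finset_product' _ _ _ (by simp)

@[to_additive]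
theorem prod_ltPairs_mul_swap_mul_prod_diag (f : n → n → M) :
    (∏ p : LtPairs n, (f p.1.1 p.1.2 * f p.1.2 p.1.1)) * ∏ i, f i i = ∏ i, ∏ j, f i j := by
  have hlt := prod_ltPairs_eq_prod_filter fun x => f x.1 x.2
  have hgt : ∏ p : LtPairs n, f p.1.2 p.1.1 = ∏ x : n × n with x.2 < x.1, f x.1 x.2 :=
    (prod_ltPairs_eq_prod_filter fun x => f x.2 x.1).trans
      (prod_equiv (Equiv.prodComm n n) (by simp) (by simp))
  have hdiag : ∏ i, f i i = ∏ x : n × n with x.1 = x.2, f x.1 x.2 := by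
    rw [prod_filter, Fintype.prod_prod_type]
    simp
  rw [prod_mul_distrib, hlt, hgt, hdiag, ← Fintype.prod_prod_type', mul_assoc,
    ← prod_filter_mul_prod_filter_not univ (fun x : n × n => x.1 < x.2), ← prod_union]
  · congr 2
    ext x
    simp [not_lt, le_iff_lt_or_eq, eq_comm]
  · rw [disjoint_filter]
    intro x _ h h'
    exact h.ne' h'

theorem prod_ltPairs_mul (d : n → M) :
    ∏ p : LtPairs n, (d p.1.1 * d p.1.2) = (∏ i, d i) ^ (Fintype.card n - 1) := by
  have h := prod_ltPairs_mul_swap_mul_prod_diag fun i j => if i = j then 1 else d i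
  simp only [if_pos, prod_const_one, mul_one] at h
  calc ∏ p : LtPairs n, (d p.1.1 * d p.1.2)
      = ∏ p : LtPairs n, ((if p.1.1 = p.1.2 then 1 else d p.1.1) *
          if p.1.2 = p.1.1 then 1 else d p.1.2) :=
        prod_congr rfl fun p _ => by rw [if_neg p.2.ne, if_neg p.2.ne']
    _ = ∏ i, d i ^ (Fintype.card n - 1) := by
        rw [h]
        refine prod_congr rfl fun i _ => ?_
        simp [prod_ite, filter_ne, card_univ]
    _ = (∏ i, d i) ^ (Fintype.card n - 1) := prod_pow _ _ _

theorem sum_ltPairs_mul_ite_val_eq {R : Type*} [NonAssocSemiring R] (A : LtPairs n → R)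
    (x : n × n) :
    ∑ q, A q * (if q.1 = x then 1 else 0) = if h : x.1 < x.2 then A ⟨x, h⟩ else 0 := by
  split_ifs with h
  · rw [Fintype.sum_eq_single ⟨x, h⟩ fun q hq => by rw [if_neg (hq ∘ Subtype.ext), mul_zero]]
    simp
  · exact sum_eq_zero fun q _ => by rw [if_neg fun hq : q.1 = x => h (hq ▸ q.2), mul_zero]

end Pairs

namespace Matrix

variable {l m n R : Type*} [CommRing R]

theorem BlockTriangular.det_of_injective [Fintype m] [DecidableEq m] {α : Type*} [LinearOrder α]
    {M : Matrix m m R} {b : m → α} (hM : M.BlockTriangular b) (hb : Function.Injective b) :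
    M.det = ∏ i, M i i := by
  let e := Equiv.ofInjective b hb
  have hup : (M.submatrix e.symm e.symm).IsUpperTriangular := fun x y hxy =>
    hM (by simpa [e, Equiv.apply_ofInjective_symm] using hxy)
  rw [← det_submatrix_equiv_self e.symm, det_of_isUpperTriangular hup]
  exact e.symm.prod_comp fun i => M i i

def secondCompound [LT m] [LT n] (A : Matrix m n R) : Matrix (LtPairs m) (LtPairs n) R :=
  of fun p q => A p.1.1 q.1.1 * A p.1.2 q.1.2 - A p.1.1 q.1.2 * A p.1.2 q.1.1

@[simp]
theorem secondCompound_apply [LT m] [LT n] (A : Matrix m n R) (p : LtPairs m) (q : LtPairs n) :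
    secondCompound A p q = A p.1.1 q.1.1 * A p.1.2 q.1.2 - A p.1.1 q.1.2 * A p.1.2 q.1.1 :=
  rfl

theorem secondCompound_mul [LT l] [LT n] [Fintype m] [LinearOrder m] (A : Matrix l m R)
    (B : Matrix m n R) : secondCompound (A * B) = secondCompound A * secondCompound B := by
  ext p q
  let F : m → m → R := fun k k' =>
    A p.1.1 k * A p.1.2 k' * (B k q.1.1 * B k' q.1.2 - B k q.1.2 * B k' q.1.1)
  have hdiag : ∑ k, F k k = 0 := sum_eq_zero fun k _ => by ring
  calc secondCompound (A * B) p q = ∑ k, ∑ k', F k k' := by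
        simp only [secondCompound_apply, mul_apply, sum_mul_sum, ← sum_sub_distrib]
        exact sum_congr rfl fun k _ => sum_congr rfl fun k' _ => by ring
    _ = ∑ r : LtPairs m, (F r.1.1 r.1.2 + F r.1.2 r.1.1) := by
        rw [← sum_ltPairs_add_swap_add_sum_diag, hdiag, add_zero]
    _ = (secondCompound A * secondCompound B) p q := by
        simp only [mul_apply, secondCompound_apply]
        exact sum_congr rfl fun r _ => by ring

theorem secondCompound_transpose [LT m] [LT n] (A : Matrix m n R) :
    secondCompound Aᵀ = (secondCompound A)ᵀ := by
  ext p q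
  simp only [secondCompound_apply, transpose_apply]
  ring

theorem secondCompound_map {S : Type*} [CommRing S] [LT m] [LT n] (f : R →+* S)
    (A : Matrix m n R) :
    secondCompound (A.map f) = (secondCompound A).map f := by
  ext p q
  simp

variable [LinearOrder m]

theorem blockTriangular_secondCompound {A : Matrix m m R} (hA : A.IsUpperTriangular) :
    (secondCompound A).BlockTriangular fun p => toLex p.1 := by
  intro p q hqp
  simp only [secondCompound_apply]
  rcases Prod.Lex.toLex_lt_toLex.1 hqp with h | ⟨h, h'⟩
  · rw [hA h, hA (h.trans p.2), zero_mul, mul_zero, sub_zero]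
  · rw [hA h', h, hA p.2, mul_zero, mul_zero, sub_zero]

theorem det_secondCompound_of_isUpperTriangular [Fintype m] {A : Matrix m m R}
    (hA : A.IsUpperTriangular) :
    (secondCompound A).det = A.det ^ (Fintype.card m - 1) := by
  rw [(blockTriangular_secondCompound hA).det_of_injective
      (toLex.injective.comp Subtype.val_injective), det_of_isUpperTriangular hA,
    ← prod_ltPairs_mul]
  refine prod_congr rfl fun p _ => ?_
  simp [hA p.2]

theorem det_secondCompound_of_isLowerTriangular [Fintype m] {A : Matrix m m R}
    (hA : A.IsLowerTriangular) :
    (secondCompound A).det = A.det ^ (Fintype.card m - 1) := by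
  rw [← det_transpose, ← secondCompound_transpose, ← det_transpose A]
  exact det_secondCompound_of_isUpperTriangular hA.transpose

theorem det_secondCompound_of_field [Fintype m] {K : Type*} [Field K] (A : Matrix m m K) :
    (secondCompound A).det = A.det ^ (Fintype.card m - 1) := by
  refine diagonal_transvection_induction (fun A => (secondCompound A).det = A.det ^ _) A
    (fun D _ => det_secondCompound_of_isUpperTriangular (blockTriangular_diagonal D))
    (fun t => ?_) fun A B hA hB => ?_
  · rcases le_total t.i t.j with h | h
    · exact det_secondCompound_of_isUpperTriangular (blockTriangular_transvection h _)
    · exact det_secondCompound_of_isLowerTriangular (blockTriangular_transvection' h _)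
  · simp only [secondCompound_mul, det_mul, hA, hB, mul_pow]

theorem det_secondCompound [Fintype m] [IsDomain R] (A : Matrix m m R) :
    (secondCompound A).det = A.det ^ (Fintype.card m - 1) := by
  apply IsFractionRing.injective R (FractionRing R)
  rw [map_pow, RingHom.map_det, RingHom.map_det, RingHom.mapMatrix_apply, RingHom.mapMatrix_apply,
    ← secondCompound_map, det_secondCompound_of_field]

theorem det_vandermonde_eq_prod_ltPairs {k : ℕ} (v : Fin k → R) :
    (vandermonde v).det = ∏ p : LtPairs (Fin k), (v p.1.2 - v p.1.1) := by
  rw [det_vandermonde, prod_ltPairs_eq_prod_prod_Ioi fun i j => v j - v i]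

end Matrix

section PairCoefficients

variable (g : ℕ) {R : Type*} [CommRing R]

def pairCoeff (v : Fin (g + 1) → R) : Matrix (LtPairs (Fin (g + 1))) (LePairs (Fin g)) R :=
  of fun rs ij =>
    if ij.1.1 = ij.1.2 then v rs.1.1 ^ (ij.1.1 : ℕ) * v rs.1.2 ^ (ij.1.1 : ℕ)
    else v rs.1.1 ^ (ij.1.1 : ℕ) * v rs.1.2 ^ (ij.1.2 : ℕ)
      + v rs.1.1 ^ (ij.1.2 : ℕ) * v rs.1.2 ^ (ij.1.1 : ℕ)

def pairShiftMatrix : Matrix (LtPairs (Fin (g + 1))) (LePairs (Fin g)) ℤ :=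
  of fun q c => (if q.1 = (c.1.1.castSucc, c.1.2.succ) then 1 else 0) -
    if q.1 = (c.1.1.succ, c.1.2.castSucc) then 1 else 0

theorem diagonal_mul_pairCoeff (v : Fin (g + 1) → R) :
    diagonal (fun p : LtPairs (Fin (g + 1)) => v p.1.2 - v p.1.1) * pairCoeff g v =
      secondCompound (vandermonde v) * (pairShiftMatrix g).map (Int.cast : ℤ → R) := by
  ext p ⟨⟨i, j⟩, hij⟩
  rw [diagonal_mul]
  simp only [mul_apply, pairShiftMatrix, map_apply, of_apply, Int.cast_sub,
    Int.cast_ite, Int.cast_one, Int.cast_zero, mul_sub, sum_sub_distrib, sum_ltPairs_mul_ite_val_eq]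
  rw [dif_pos (Fin.castSucc_lt_succ_iff.2 hij)]
  simp only [pairCoeff, of_apply, secondCompound_apply, vandermonde_apply, Fin.val_succ,
    Fin.val_castSucc]
  obtain rfl | hlt := eq_or_lt_of_le (show i ≤ j from hij)
  · rw [if_pos rfl, dif_neg (by simp [Fin.lt_def])]
    ring
  · rw [if_neg hlt.ne]
    split_ifs with h
    · ring
    · have hj : (j : ℕ) = i + 1 := by
        rw [Fin.lt_def] at hlt h
        simp only [Fin.val_succ, Fin.val_castSucc] at h
        omega
      rw [hj]
      ring

def lePairsEquivLtPairs : LePairs (Fin g) ≃ LtPairs (Fin (g + 1)) where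
  toFun c := ⟨(c.1.1.castSucc, c.1.2.succ), Fin.castSucc_lt_succ_iff.2 c.2⟩
  invFun q := ⟨(q.1.1.castPred (Fin.ne_last_of_lt q.2), q.1.2.pred (Fin.ne_zero_of_lt q.2)),
    (Fin.castPred_le_pred_iff (Fin.ne_last_of_lt q.2) (Fin.ne_zero_of_lt q.2)).2 q.2⟩
  left_inv c := by simp
  right_inv q := by simp

theorem pairShiftMatrix_submatrix_apply (c' c : LePairs (Fin g)) :
    (pairShiftMatrix g).submatrix (lePairsEquivLtPairs g) id c' c =
      (if c' = c then 1 else 0) -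
        if c'.1.1.castSucc = c.1.1.succ ∧ c'.1.2.succ = c.1.2.castSucc then 1 else 0 := by
  simp [pairShiftMatrix, lePairsEquivLtPairs, Subtype.ext_iff, Prod.ext_iff]

theorem blockTriangular_pairShiftMatrix_submatrix :
    ((pairShiftMatrix g).submatrix (lePairsEquivLtPairs g) id).BlockTriangular
      fun c => OrderDual.toDual c.1.1 := by
  intro c' c (hlt : c'.1.1 < c.1.1)
  rw [pairShiftMatrix_submatrix_apply, if_neg fun h : c' = c => hlt.ne (by rw [h]),
    if_neg fun h => lt_asymm hlt (Fin.succ_le_castSucc_iff.1 h.1.ge), sub_zero]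

theorem det_pairShiftMatrix_submatrix :
    ((pairShiftMatrix g).submatrix (lePairsEquivLtPairs g) id).det = 1 := by
  rw [(blockTriangular_pairShiftMatrix_submatrix g).det]
  refine prod_eq_one fun k _ => ?_
  suffices h : ((pairShiftMatrix g).submatrix (lePairsEquivLtPairs g) id).toSquareBlock
      (fun c => OrderDual.toDual c.1.1) k = 1 by
    rw [h, det_one]
  ext ⟨c', hc'⟩ ⟨c, hc⟩
  have hi : c'.1.1 = c.1.1 := OrderDual.toDual.injective (hc'.trans hc.symm)
  simp only [toSquareBlock_def, of_apply, pairShiftMatrix_submatrix_apply, one_apply,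
    Subtype.mk.injEq]
  have hshift : ¬(c'.1.1.castSucc = c.1.1.succ ∧ c'.1.2.succ = c.1.2.castSucc) := fun h =>
    (Fin.succ_le_castSucc_iff.1 h.1.ge).ne' hi
  rw [if_neg hshift, sub_zero]

theorem isUnit_det_pairShiftMatrix_submatrix (σ : LtPairs (Fin (g + 1)) ≃ LePairs (Fin g)) :
    IsUnit ((pairShiftMatrix g).submatrix id σ).det := by
  have h : (pairShiftMatrix g).submatrix id σ =
      ((pairShiftMatrix g).submatrix (lePairsEquivLtPairs g) id).submatrix
        (lePairsEquivLtPairs g).symm σ := by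
    ext; simp
  rw [Int.isUnit_iff_abs_eq, h, abs_det_submatrix_equiv_equiv, det_pairShiftMatrix_submatrix,
    abs_one]

theorem det_pairCoeff_submatrix_of_injective [IsDomain R] {v : Fin (g + 1) → R}
    (hv : Function.Injective v) (σ : LtPairs (Fin (g + 1)) ≃ LePairs (Fin g)) :
    ((pairCoeff g v).submatrix id σ).det =
      (vandermonde v).det ^ (g - 1) * (((pairShiftMatrix g).submatrix id σ).det : R) := by
  have key := congrArg (fun M => (M.submatrix id σ).det) (diagonal_mul_pairCoeff g v)
  simp only [submatrix_mul _ _ _ id _ Function.bijective_id, submatrix_id_id, det_mul,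
    det_diagonal, det_secondCompound, Fintype.card_fin, add_tsub_cancel_right,
    ← det_vandermonde_eq_prod_ltPairs] at key
  have hshift : (((pairShiftMatrix g).map Int.cast).submatrix id σ).det =
      (((pairShiftMatrix g).submatrix id σ).det : R) := by
    rw [submatrix_map]
    exact ((Int.castRingHom R).map_det _).symm
  have hpow : (vandermonde v).det ^ g = (vandermonde v).det * (vandermonde v).det ^ (g - 1) := by
    cases g with
    | zero => simp
    | succ g => rw [pow_succ', Nat.add_sub_cancel]
  rw [hshift, hpow, mul_assoc] at key
  exact mul_left_cancel₀ (det_vandermonde_ne_zero_iff.2 hv) key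

theorem pairCoeff_map {S : Type*} [CommRing S] (f : R →+* S) (v : Fin (g + 1) → R) :
    (pairCoeff g v).map f = pairCoeff g (f ∘ v) := by
  ext p c
  simp only [pairCoeff, map_apply, of_apply, Function.comp_apply]
  split_ifs <;> simp

theorem det_pairCoeff_submatrix (v : Fin (g + 1) → R)
    (σ : LtPairs (Fin (g + 1)) ≃ LePairs (Fin g)) :
    ((pairCoeff g v).submatrix id σ).det =
      (vandermonde v).det ^ (g - 1) * (((pairShiftMatrix g).submatrix id σ).det : R) := by
  let f : MvPolynomial (Fin (g + 1)) ℤ →+* R := MvPolynomial.eval₂Hom (Int.castRingHom R) v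
  have h := congrArg f
    (det_pairCoeff_submatrix_of_injective g (MvPolynomial.X_injective (R := ℤ)) σ)
  have hX : f ∘ MvPolynomial.X = v := funext fun i => MvPolynomial.eval₂Hom_X' _ v i
  have hV : (vandermonde MvPolynomial.X).map f = vandermonde v := by
    rw [← hX]
    ext i j
    simp
  rwa [RingHom.map_det, RingHom.mapMatrix_apply, ← submatrix_map, pairCoeff_map, hX, map_mul,
    map_pow, RingHom.map_det, RingHom.mapMatrix_apply, hV, map_intCast] at h

end PairCoefficients

theorem pairCoeffMatrix_det_general
    (g : ℕ)
    (σ : {p : Fin (g + 1) × Fin (g + 1) // p.1 < p.2} ≃ {p : Fin g × Fin g // p.1 ≤ p.2}) :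
    ∃ ε : ℂ, (ε = 1 ∨ ε = -1) ∧
      (∀ a : Fin (g + 1) → ℂ,
        (Matrix.of fun r r' : {p : Fin (g + 1) × Fin (g + 1) // p.1 < p.2} =>
            pairCoeffMatrix g a r (σ r')).det
          = ε * ∏ p : {p : Fin (g + 1) × Fin (g + 1) // p.1 < p.2},
              (a p.1.1 - a p.1.2) ^ (g - 1)) ∧
      (∀ a : Fin (g + 1) → ℂ, Function.Injective a →
        (Matrix.of fun r r' : {p : Fin (g + 1) × Fin (g + 1) // p.1 < p.2} =>
            pairCoeffMatrix g a r (σ r')).det ≠ 0) := by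
  set N := Fintype.card (LtPairs (Fin (g + 1)))
  set t := ((pairShiftMatrix g).submatrix id σ).det
  have hdet (a : Fin (g + 1) → ℂ) :
      (Matrix.of fun r r' => pairCoeffMatrix g a r (σ r')).det =
        (((-1) ^ (N * (g - 1)) * t : ℤ) : ℂ) * ∏ p : LtPairs (Fin (g + 1)),
          (a p.1.1 - a p.1.2) ^ (g - 1) := by
    have hneg : ∏ p : LtPairs (Fin (g + 1)), (a p.1.2 - a p.1.1) =
        (-1) ^ N * ∏ p : LtPairs (Fin (g + 1)), (a p.1.1 - a p.1.2) := by
      simp only [N, ← card_univ, ← prod_neg, neg_sub]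
    have hM : Matrix.of (fun r r' => pairCoeffMatrix g a r (σ r')) =
        (pairCoeff g a).submatrix id σ := rfl
    rw [hM, det_pairCoeff_submatrix, det_vandermonde_eq_prod_ltPairs, hneg, prod_pow,
      Int.cast_mul, Int.cast_pow, Int.cast_neg, Int.cast_one, mul_pow, ← pow_mul]
    ring
  have hunit : IsUnit ((-1) ^ (N * (g - 1)) * t) :=
    (isUnit_neg_one.pow _).mul (isUnit_det_pairShiftMatrix_submatrix g σ)
  refine ⟨_, ?_, hdet, fun a ha => ?_⟩
  · rcases Int.isUnit_iff.1 hunit with h | h <;> simp [h]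
  · rw [hdet]
    exact mul_ne_zero (by exact_mod_cast hunit.ne_zero)
      (prod_ne_zero_iff.2 fun p _ => pow_ne_zero _ (sub_ne_zero.2 (ha.ne p.2.ne)))

/-- for `g ≥ 2` and any identification `σ` of the `g(g+1)/2` row indices with
the `g(g+1)/2` column indices, there is a sign `ε ∈ {+1, −1}` depending only on `g` (and the
fixed identification) such that for all `a_1, …, a_{g+1}`,
`det M = ε ∏_{r<s} (a_r − a_s)^{g−1}`;
in particular `det M ≠ 0` whenever the `a_r` are pairwise distinct. -/
theorem pairCoeffMatrix_det
    (g : ℕ) (hg : 2 ≤ g)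
    (σ : {p : Fin (g + 1) × Fin (g + 1) // p.1 < p.2} ≃ {p : Fin g × Fin g // p.1 ≤ p.2}) :
    ∃ ε : ℂ, (ε = 1 ∨ ε = -1) ∧
      (∀ a : Fin (g + 1) → ℂ,
        (Matrix.of fun r r' : {p : Fin (g + 1) × Fin (g + 1) // p.1 < p.2} =>
            pairCoeffMatrix g a r (σ r')).det
          = ε * ∏ p : {p : Fin (g + 1) × Fin (g + 1) // p.1 < p.2},
              (a p.1.1 - a p.1.2) ^ (g - 1)) ∧
      (∀ a : Fin (g + 1) → ℂ, Function.Injective a →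
        (Matrix.of fun r r' : {p : Fin (g + 1) × Fin (g + 1) // p.1 < p.2} =>
            pairCoeffMatrix g a r (σ r')).det ≠ 0) :=
  pairCoeffMatrix_det_general g σ
end

section
/- Let g ≥ 1 and let a_1, …, a_{g+1} ∈ ℂ be pairwise distinct. Then for any prescribed complex numbers q_{rs}, one for each pair 1 ≤ r < s ≤ g+1, there exists a unique symmetric g×g complex matrix Λ such that ∑_{i,j=1}^{g} Λ_{ij} a_r^{i−1} a_s^{j−1} = q_{rs} for all 1 ≤ r < s ≤ g+1. -/
open Finset

namespace SymPairAux

open Matrix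

/-- Rows of a Vandermonde matrix with distinct nodes are linearly independent. -/
lemma vand_li {g : ℕ} (b : Fin g → ℂ) (hb : Function.Injective b) :
    LinearIndependent ℂ (fun r => (fun i : Fin g => b r ^ (i : ℕ))) := by
  have hdet : (Matrix.vandermonde b).det ≠ 0 :=
    Matrix.det_vandermonde_ne_zero_iff.mpr hb
  have hu : IsUnit (Matrix.vandermonde b) :=
    (Matrix.isUnit_iff_isUnit_det _).mpr (isUnit_iff_ne_zero.mpr hdet)
  have := Matrix.linearIndependent_rows_iff_isUnit.mpr hu
  exact this

/-- Core injectivity lemma: a symmetric matrix with vanishing pair evaluations is zero. -/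
lemma core (g : ℕ) (a : Fin (g + 1) → ℂ) (ha : Function.Injective a)
    (Λ : Matrix (Fin g) (Fin g) ℂ) (hs : Λ.IsSymm)
    (h0 : ∀ r s : Fin (g + 1), r < s →
      ∑ i, ∑ j, Λ i j * a r ^ (i : ℕ) * a s ^ (j : ℕ) = 0) :
    Λ = 0 := by
  set E : Fin (g + 1) → Fin (g + 1) → ℂ :=
    fun r s => ∑ i, ∑ j, Λ i j * a r ^ (i : ℕ) * a s ^ (j : ℕ) with hE
  have hsymE : ∀ r s, E r s = E s r := by
    intro r s
    rw [hE]
    simp only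
    rw [Finset.sum_comm]
    refine Finset.sum_congr rfl fun j _ => Finset.sum_congr rfl fun i _ => ?_
    rw [← hs.apply i j]
    ring
  have hne : ∀ r s, r ≠ s → E r s = 0 := by
    intro r s hrs
    rcases lt_or_gt_of_ne hrs with h | h
    · exact h0 r s h
    · rw [hsymE]; exact h0 s r h
  have hdiag : ∀ s, E s s = 0 := by
    intro s
    have hnli : ¬ LinearIndependent ℂ
        (fun r : Fin (g + 1) => (fun i : Fin g => a r ^ (i : ℕ))) := by
      intro h
      have hcard := h.fintype_card_le_finrank
      rw [Module.finrank_fintype_fun_eq_card] at hcard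
      simp at hcard
    obtain ⟨c, hc, r0, hr0⟩ := Fintype.not_linearIndependent_iff.mp hnli
    have hcz : ∀ r, c r ≠ 0 := by
      intro r1 h1
      have hli : LinearIndependent ℂ
          (fun t : Fin g => (fun i : Fin g => a (r1.succAbove t) ^ (i : ℕ))) :=
        vand_li _ (ha.comp (Fin.succAbove_right_injective))
      have hsum := Fin.sum_univ_succAbove
        (fun r => c r • (fun i : Fin g => a r ^ (i : ℕ))) r1
      rw [hc, h1, zero_smul, zero_add] at hsum
      have hzero := (Fintype.linearIndependent_iff.mp hli)
        (fun t => c (r1.succAbove t)) hsum.symm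
      rcases eq_or_ne r0 r1 with h | h
      · exact hr0 (h ▸ h1)
      · obtain ⟨t, ht⟩ := Fin.exists_succAbove_eq h
        exact hr0 (ht ▸ hzero t)
    have hfun : ∀ i : Fin g, ∑ r, c r * a r ^ (i : ℕ) = 0 := by
      intro i
      have := congrFun hc i
      simpa using this
    have key : ∑ r, c r * E r s = 0 := by
      rw [hE]
      simp only
      calc ∑ r, c r * ∑ i, ∑ j, Λ i j * a r ^ (i : ℕ) * a s ^ (j : ℕ)
          = ∑ r, ∑ i, ∑ j, c r * (Λ i j * a r ^ (i : ℕ) * a s ^ (j : ℕ)) := by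
            simp_rw [Finset.mul_sum]
        _ = ∑ i, ∑ r, ∑ j, c r * (Λ i j * a r ^ (i : ℕ) * a s ^ (j : ℕ)) :=
            Finset.sum_comm
        _ = ∑ i, ∑ j, ∑ r, c r * (Λ i j * a r ^ (i : ℕ) * a s ^ (j : ℕ)) :=
            Finset.sum_congr rfl fun i _ => Finset.sum_comm
        _ = ∑ i, ∑ j, Λ i j * (∑ r, c r * a r ^ (i : ℕ)) * a s ^ (j : ℕ) := by
            refine Finset.sum_congr rfl fun i _ => Finset.sum_congr rfl fun j _ => ?_
            rw [Finset.mul_sum, Finset.sum_mul]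
            exact Finset.sum_congr rfl fun r _ => by ring
        _ = 0 := by
            refine Finset.sum_eq_zero fun i _ => Finset.sum_eq_zero fun j _ => ?_
            rw [hfun i, mul_zero, zero_mul]
    have key2 : ∑ r, c r * E r s = c s * E s s := by
      rw [Finset.sum_eq_single s]
      · intro r _ hrs
        rw [hne r s hrs, mul_zero]
      · intro h
        exact absurd (Finset.mem_univ s) h
    have hcs : c s * E s s = 0 := key2 ▸ key
    exact (mul_eq_zero.mp hcs).resolve_left (hcz s)
  have hfull : ∀ r s, E r s = 0 := by
    intro r s
    rcases eq_or_ne r s with rfl | h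
    · exact hdiag r
    · exact hne r s h
  -- matrix form
  set W : Matrix (Fin g) (Fin g) ℂ :=
    Matrix.vandermonde (fun i => a i.castSucc) with hW
  have hdetW : IsUnit W.det := by
    refine isUnit_iff_ne_zero.mpr (Matrix.det_vandermonde_ne_zero_iff.mpr ?_)
    exact ha.comp (Fin.castSucc_injective g)
  have hWLW : W * Λ * Wᵀ = 0 := by
    ext r s
    have h := hfull r.castSucc s.castSucc
    rw [hE] at h
    simp only [Matrix.mul_apply, Matrix.transpose_apply, Matrix.zero_apply]
    calc ∑ j, (∑ i, W r i * Λ i j) * W s j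
        = ∑ j, ∑ i, W r i * Λ i j * W s j := by
          simp_rw [Finset.sum_mul]
      _ = ∑ i, ∑ j, W r i * Λ i j * W s j := Finset.sum_comm
      _ = ∑ i, ∑ j, Λ i j * a r.castSucc ^ (i : ℕ) * a s.castSucc ^ (j : ℕ) := by
          refine Finset.sum_congr rfl fun i _ => Finset.sum_congr rfl fun j _ => ?_
          rw [hW]
          simp only [Matrix.vandermonde_apply]
          ring
      _ = 0 := h
  haveI : Invertible W := W.invertibleOfIsUnitDet hdetW
  haveI : Invertible Wᵀ := Matrix.invertibleTranspose W
  have h2 : Λ = ⅟W * (W * Λ * Wᵀ) * ⅟Wᵀ := by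
    calc Λ = 1 * Λ * 1 := by rw [Matrix.one_mul, Matrix.mul_one]
      _ = (⅟W * W) * Λ * (Wᵀ * ⅟Wᵀ) := by rw [invOf_mul_self, mul_invOf_self]
      _ = ⅟W * (W * Λ * Wᵀ) * ⅟Wᵀ := by
          simp only [Matrix.mul_assoc]
  rw [hWLW, Matrix.mul_zero, Matrix.zero_mul] at h2
  exact h2

/-- Encode a function on ordered pairs as a symmetric matrix. -/
def mk (g : ℕ) (f : {p : Fin g × Fin g // p.1 ≤ p.2} → ℂ) : Matrix (Fin g) (Fin g) ℂ :=
  Matrix.of fun i j => if h : i ≤ j then f ⟨(i, j), h⟩ else f ⟨(j, i), le_of_not_ge h⟩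

lemma mk_apply (g : ℕ) (f : {p : Fin g × Fin g // p.1 ≤ p.2} → ℂ) (i j : Fin g) :
    mk g f i j = if h : i ≤ j then f ⟨(i, j), h⟩ else f ⟨(j, i), le_of_not_ge h⟩ := rfl

lemma mk_symm (g : ℕ) (f : {p : Fin g × Fin g // p.1 ≤ p.2} → ℂ) : (mk g f).IsSymm := by
  refine Matrix.ext fun i j => ?_
  rw [Matrix.transpose_apply, mk_apply, mk_apply]
  rcases le_or_gt i j with h | h
  · rcases eq_or_lt_of_le h with rfl | h'
    · simp
    · rw [dif_pos h, dif_neg (not_le.mpr h')]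
  · rw [dif_neg (not_le.mpr h), dif_pos h.le]

lemma mk_add (g : ℕ) (f f' : {p : Fin g × Fin g // p.1 ≤ p.2} → ℂ) (i j : Fin g) :
    mk g (f + f') i j = mk g f i j + mk g f' i j := by
  by_cases h : i ≤ j <;> simp [mk_apply, h]

lemma mk_smul (g : ℕ) (c : ℂ) (f : {p : Fin g × Fin g // p.1 ≤ p.2} → ℂ) (i j : Fin g) :
    mk g (c • f) i j = c * mk g f i j := by
  by_cases h : i ≤ j <;> simp [mk_apply, h]

/-- The evaluation linear map. -/
noncomputable def Tmap (g : ℕ) (a : Fin (g + 1) → ℂ) :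
    ({p : Fin g × Fin g // p.1 ≤ p.2} → ℂ) →ₗ[ℂ]
      ({p : Fin (g + 1) × Fin (g + 1) // p.1 < p.2} → ℂ) where
  toFun f := fun p => ∑ i, ∑ j, mk g f i j * a p.1.1 ^ (i : ℕ) * a p.1.2 ^ (j : ℕ)
  map_add' f f' := by
    funext p
    simp only [mk_add, add_mul, Finset.sum_add_distrib, Pi.add_apply]
  map_smul' c f := by
    funext p
    simp only [mk_smul, RingHom.id_apply, Pi.smul_apply, smul_eq_mul, Finset.mul_sum, mul_assoc]

lemma Tmap_inj (g : ℕ) (a : Fin (g + 1) → ℂ) (ha : Function.Injective a) :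
    Function.Injective (Tmap g a) := by
  refine (injective_iff_map_eq_zero (Tmap g a)).mpr fun f hf => ?_
  have hΛ : mk g f = 0 := by
    refine core g a ha (mk g f) (mk_symm g f) fun r s hrs => ?_
    exact congrFun hf ⟨(r, s), hrs⟩
  funext p
  obtain ⟨⟨i, j⟩, h⟩ := p
  have h0 : mk g f i j = 0 := by rw [hΛ]; rfl
  rwa [mk_apply, dif_pos h] at h0

/-- The equivalence between pairs `i ≤ j` in `Fin g` and pairs `r < s` in `Fin (g+1)`. -/
def pairEquiv (g : ℕ) :
    {p : Fin g × Fin g // p.1 ≤ p.2} ≃ {p : Fin (g + 1) × Fin (g + 1) // p.1 < p.2} where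
  toFun p := ⟨(p.1.1.castSucc, p.1.2.succ), by
    have h := p.2
    rw [Fin.le_def] at h
    rw [Fin.lt_def]
    simp only [Fin.coe_castSucc, Fin.val_succ]
    omega⟩
  invFun p := ⟨(⟨p.1.1.1, by
      have h := p.2; rw [Fin.lt_def] at h
      have h2 := p.1.2.2; omega⟩,
    ⟨p.1.2.1 - 1, by
      have h := p.2; rw [Fin.lt_def] at h
      have h2 := p.1.2.2; omega⟩), by
    have h := p.2; rw [Fin.lt_def] at h
    rw [Fin.le_def]
    simp only
    omega⟩
  left_inv p := by
    apply Subtype.ext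
    apply Prod.ext <;> apply Fin.ext <;> simp
  right_inv p := by
    have h := p.2; rw [Fin.lt_def] at h
    apply Subtype.ext
    apply Prod.ext <;> apply Fin.ext <;> simp <;> omega

lemma Tmap_surj (g : ℕ) (a : Fin (g + 1) → ℂ) (ha : Function.Injective a) :
    Function.Surjective (Tmap g a) := by
  let E := LinearEquiv.funCongrLeft ℂ ℂ (pairEquiv g)
  let T' := E.toLinearMap ∘ₗ Tmap g a
  have hinj : Function.Injective T' := E.injective.comp (Tmap_inj g a ha)
  have hsurj : Function.Surjective T' := LinearMap.injective_iff_surjective.mp hinj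
  intro y
  obtain ⟨f, hf⟩ := hsurj (E y)
  refine ⟨f, E.injective ?_⟩
  exact hf

end SymPairAux

/-- Proposition 6.2 of the paper: for pairwise distinct
`a_1, …, a_{g+1} ∈ ℂ` and prescribed values `q_{rs}` (`r < s`), there is a unique symmetric
`g×g` complex matrix `Λ` with `∑_{i,j} Λ_ij a_r^{i−1} a_s^{j−1} = q_{rs}` for all
`1 ≤ r < s ≤ g+1`. -/
theorem symmetric_matrix_unique_from_pair_evaluations
    (g : ℕ) (hg : 1 ≤ g) (a : Fin (g + 1) → ℂ) (ha : Function.Injective a)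
    (q : Fin (g + 1) → Fin (g + 1) → ℂ) :
    ∃! Λ : Matrix (Fin g) (Fin g) ℂ, Λ.IsSymm ∧
      ∀ r s : Fin (g + 1), r < s →
        ∑ i, ∑ j, Λ i j * a r ^ (i : ℕ) * a s ^ (j : ℕ) = q r s := by
  obtain ⟨f, hf⟩ := SymPairAux.Tmap_surj g a ha (fun p => q p.1.1 p.1.2)
  refine ⟨SymPairAux.mk g f, ⟨SymPairAux.mk_symm g f, fun r s hrs => ?_⟩, ?_⟩
  · exact congrFun hf ⟨(r, s), hrs⟩
  · rintro Λ' ⟨hsym', hq'⟩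
    have hd : (Λ' - SymPairAux.mk g f).IsSymm :=
      Matrix.IsSymm.sub hsym' (SymPairAux.mk_symm g f)
    have h0 : ∀ r s : Fin (g + 1), r < s →
        ∑ i, ∑ j, (Λ' - SymPairAux.mk g f) i j * a r ^ (i : ℕ) * a s ^ (j : ℕ) = 0 := by
      intro r s hrs
      have h1 := hq' r s hrs
      have h2 : ∑ i, ∑ j, SymPairAux.mk g f i j * a r ^ (i : ℕ) * a s ^ (j : ℕ) = q r s :=
        congrFun hf ⟨(r, s), hrs⟩
      simp only [Matrix.sub_apply, sub_mul, Finset.sum_sub_distrib]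
      rw [h1, h2, sub_self]
    have hz := SymPairAux.core g a ha _ hd h0
    exact sub_eq_zero.mp hz
end

section
/- Let g ≥ 1, let e_1, …, e_{2g+2} ∈ ℂ, let f(x) = ∏_{m=1}^{2g+2}(x − e_m) = ∑_{k=0}^{2g+2} λ_k x^k with Kleinian 2-polar F(x,z), let S be a (g+1)-element subset of {1,…,2g+2}, and let Λ be a symmetric g×g complex matrix satisfying P_S(x)P_{S^c}(z) + P_S(z)P_{S^c}(x) − F(x,z) = (x−z)² ∑_{i,j=1}^{g} Λ_{ij} x^{i−1} z^{j−1}. Then the corner entry satisfies Λ_{g,g} = S_2(S) + S_2(S^c), where S_2(T) denotes the elementary symmetric polynomial of degree 2 in the numbers e_i, i ∈ T. (For g = 3, e.g. S = {1,2,3,4}, this is the paper's Example 6.3: Λ_{3,3} = e_1e_2 + e_3e_4 + e_5e_6 + e_7e_8 + (e_1+e_2)(e_3+e_4) + (e_5+e_6)(e_7+e_8).) -/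
open Finset

open Polynomial

/-- Bivariate polynomials over `ℂ` that agree as functions are equal. -/
lemma bipoly_ext {p q : Polynomial (Polynomial ℂ)}
    (h : ∀ x z : ℂ, eval₂ (evalRingHom z) x p = eval₂ (evalRingHom z) x q) : p = q := by
  apply Polynomial.ext; intro n
  apply Polynomial.funext; intro z
  have h1 : p.map (evalRingHom z) = q.map (evalRingHom z) :=
    Polynomial.funext fun x => by
      simpa [eval₂_eq_eval_map] using h x z
  simpa [coeff_map] using congrArg (fun r => Polynomial.coeff r n) h1

/-- Vieta: the coefficient two below the top of `∏ (X - e i)` is the degree-2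
elementary symmetric function. -/
lemma coeff_prod_X_sub_C_two {n : ℕ} (T : Finset (Fin n)) (e : Fin n → ℂ) (m : ℕ)
    (hT : T.card = m + 2) :
    (∏ i ∈ T, (X - C (e i))).coeff m = esymOn T 2 e := by
  have h : ∀ i ∈ T, (X : ℂ[X]) - C (e i) = X + C (-(e i)) := by
    intro i _; simp [sub_eq_add_neg]
  have hm : m ≤ T.card := by omega
  rw [Finset.prod_congr rfl h, Finset.prod_X_add_C_coeff _ _ hm, hT]
  have h2 : m + 2 - m = 2 := by omega
  rw [h2]
  unfold esymOn
  apply Finset.sum_congr rfl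
  intro t ht
  have htc : t.card = 2 := (Finset.mem_powersetCard.1 ht).2
  calc ∏ i ∈ t, (-(e i)) = ∏ i ∈ t, ((-1) * e i) := by simp
    _ = ((-1 : ℂ) ^ t.card) * ∏ i ∈ t, e i := by
        rw [Finset.prod_mul_distrib, Finset.prod_const]
    _ = ∏ i ∈ t, e i := by rw [htc]; ring

/-- for the partition matrix `Λ` of a `(g+1)`-subset `S` (i.e. the symmetric
matrix with `P_S(x)P_{S^c}(z) + P_S(z)P_{S^c}(x) − F(x,z) = (x−z)² ∑ Λ_ij x^{i−1}z^{j−1}`),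
the corner entry satisfies `Λ_{g,g} = S_2(S) + S_2(S^c)`. -/
theorem partition_matrix_corner_entry
    (g : ℕ) (hg : 1 ≤ g) (e : Fin (2 * g + 2) → ℂ)
    (lam : ℕ → ℂ)
    (hlam : ∀ x : ℂ, ∏ m, (x - e m) = ∑ k ∈ Finset.range (2 * g + 3), lam k * x ^ k)
    (F : ℂ → ℂ → ℂ)
    (hF : ∀ x z : ℂ, F x z = 2 * lam (2 * g + 2) * x ^ (g + 1) * z ^ (g + 1)
        + ∑ k ∈ Finset.range (g + 1),
            x ^ k * z ^ k * (2 * lam (2 * k) + (x + z) * lam (2 * k + 1)))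
    (S : Finset (Fin (2 * g + 2))) (hS : S.card = g + 1)
    (Λ : Matrix (Fin g) (Fin g) ℂ) (hΛsymm : Λ.IsSymm)
    (hΛ : ∀ x z : ℂ,
        (∏ i ∈ S, (x - e i)) * (∏ j ∈ Sᶜ, (z - e j))
          + (∏ i ∈ S, (z - e i)) * (∏ j ∈ Sᶜ, (x - e j)) - F x z
        = (x - z) ^ 2 * ∑ a, ∑ b, Λ a b * x ^ (a : ℕ) * z ^ (b : ℕ)) :
    Λ ⟨g - 1, by omega⟩ ⟨g - 1, by omega⟩ = esymOn S 2 e + esymOn Sᶜ 2 e := by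
  classical
  have hSc : Sᶜ.card = g + 1 := by
    have := Finset.card_compl S
    simp [Fintype.card_fin, hS] at this
    omega
  -- the bivariate polynomial identity
  have key :
      (∏ i ∈ S, (X - C (C (e i)))) * C (∏ j ∈ Sᶜ, (X - C (e j)))
        + C (∏ i ∈ S, (X - C (e i))) * (∏ j ∈ Sᶜ, (X - C (C (e j))))
        - (C (C (2 * lam (2 * g + 2))) * X ^ (g + 1) * (C X) ^ (g + 1)
            + ∑ k ∈ Finset.range (g + 1),
                X ^ k * (C X) ^ k *
                  (C (C (2 * lam (2 * k))) + (X + C X) * C (C (lam (2 * k + 1)))))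
      = (X - C X) ^ 2 *
          ∑ a : Fin g, ∑ b : Fin g, C (C (Λ a b)) * X ^ (a : ℕ) * (C X) ^ (b : ℕ) := by
    apply bipoly_ext
    intro x z
    have hx := hΛ x z
    rw [hF x z] at hx
    simp only [eval₂_sub, eval₂_add, eval₂_mul, eval₂_pow, eval₂_X, eval₂_C,
      eval₂_finset_sum, eval₂_finset_prod, coe_evalRingHom, eval_prod, eval_sub,
      eval_add, eval_mul, eval_pow, eval_X, eval_C]
    linear_combination hx

  -- double-coefficient of a monomial
  have hmono : ∀ (c : ℂ) (n m : ℕ),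
      ((C (C c) * X ^ n * (C X) ^ m : Polynomial (Polynomial ℂ)).coeff (g + 1)).coeff (g - 1)
        = if n = g + 1 ∧ m = g - 1 then c else 0 := by
    intro c n m
    have h : (C (C c) * X ^ n * (C X) ^ m : Polynomial (Polynomial ℂ))
        = C (C c * X ^ m) * X ^ n := by
      rw [map_mul, map_pow]; ring
    rw [h, coeff_C_mul, coeff_X_pow]
    rcases eq_or_ne n (g + 1) with hn | hn
    · rcases eq_or_ne m (g - 1) with hm | hm
      · simp [hn, hm, coeff_C_mul, coeff_X_pow]
      · simp [hn, hm, coeff_C_mul, coeff_X_pow, Ne.symm hm]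
    · simp [hn, Ne.symm hn]
  have hFk : ∀ k : ℕ,
      (X ^ k * (C X) ^ k *
          (C (C (2 * lam (2 * k))) + (X + C X) * C (C (lam (2 * k + 1)))) :
        Polynomial (Polynomial ℂ))
      = C (C (2 * lam (2 * k))) * X ^ k * (C X) ^ k
        + C (C (lam (2 * k + 1))) * X ^ (k + 1) * (C X) ^ k
        + C (C (lam (2 * k + 1))) * X ^ k * (C X) ^ (k + 1) := by
    intro k; ring
  have hsq : ∀ (c : ℂ) (n m : ℕ),
      (((X : Polynomial (Polynomial ℂ)) - C X) ^ 2 * (C (C c) * X ^ n * (C X) ^ m))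
      = C (C c) * X ^ (n + 2) * (C X) ^ m
        + C (C (-2 * c)) * X ^ (n + 1) * (C X) ^ (m + 1)
        + C (C c) * X ^ n * (C X) ^ (m + 2) := by
    intro c n m
    have h2 : (C (C (-2 * c)) : Polynomial (Polynomial ℂ)) = -2 * C (C c) := by
      rw [neg_mul, map_neg, map_neg, map_mul, map_mul, map_ofNat, map_ofNat]; ring
    rw [h2]; ring
  have hAS : (∏ i ∈ S, ((X : Polynomial (Polynomial ℂ)) - C (C (e i)))).coeff (g + 1) = 1 := by
    have hm : (∏ i ∈ S, ((X : Polynomial (Polynomial ℂ)) - C (C (e i)))).Monic :=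
      monic_prod_of_monic _ _ fun i _ => monic_X_sub_C _
    have hd : (∏ i ∈ S, ((X : Polynomial (Polynomial ℂ)) - C (C (e i)))).natDegree = g + 1 := by
      rw [natDegree_prod]
      · simp [natDegree_X_sub_C, hS]
      · exact fun i _ => X_sub_C_ne_zero _
    have h := hm.coeff_natDegree
    rwa [hd] at h
  have hASc : (∏ j ∈ Sᶜ, ((X : Polynomial (Polynomial ℂ)) - C (C (e j)))).coeff (g + 1) = 1 := by
    have hm : (∏ j ∈ Sᶜ, ((X : Polynomial (Polynomial ℂ)) - C (C (e j)))).Monic :=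
      monic_prod_of_monic _ _ fun i _ => monic_X_sub_C _
    have hd : (∏ j ∈ Sᶜ, ((X : Polynomial (Polynomial ℂ)) - C (C (e j)))).natDegree = g + 1 := by
      rw [natDegree_prod]
      · simp [natDegree_X_sub_C, hSc]
      · exact fun i _ => X_sub_C_ne_zero _
    have h := hm.coeff_natDegree
    rwa [hd] at h
  have C1 : (((∏ i ∈ S, (X - C (C (e i)))) * C (∏ j ∈ Sᶜ, (X - C (e j)))).coeff (g + 1)).coeff (g - 1)
      = esymOn Sᶜ 2 e := by
    rw [coeff_mul_C, hAS, one_mul, coeff_prod_X_sub_C_two Sᶜ e (g - 1) (by omega)]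
  have C2 : ((( C (∏ i ∈ S, (X - C (e i))) * ∏ j ∈ Sᶜ, (X - C (C (e j)))).coeff (g + 1)).coeff (g - 1))
      = esymOn S 2 e := by
    rw [coeff_C_mul, hASc, mul_one, coeff_prod_X_sub_C_two S e (g - 1) (by omega)]
  have C3a : ((( C (C (2 * lam (2 * g + 2))) * X ^ (g + 1) * (C X) ^ (g + 1) : Polynomial (Polynomial ℂ)).coeff (g + 1)).coeff (g - 1)) = 0 := by
    rw [hmono, if_neg (by omega)]
  have C3b : (((∑ k ∈ Finset.range (g + 1),
        X ^ k * (C X) ^ k *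
          (C (C (2 * lam (2 * k))) + (X + C X) * C (C (lam (2 * k + 1)))) :
        Polynomial (Polynomial ℂ)).coeff (g + 1)).coeff (g - 1)) = 0 := by
    rw [finset_sum_coeff, finset_sum_coeff]
    apply Finset.sum_eq_zero
    intro k hk
    have hk' : k < g + 1 := Finset.mem_range.mp hk
    rw [hFk k]
    simp only [coeff_add]
    rw [hmono, hmono, hmono, if_neg (by omega), if_neg (by omega), if_neg (by omega)]
    ring
  have hsum : ∑ a : Fin g, ∑ b : Fin g,
      (if (a : ℕ) + 2 = g + 1 ∧ (b : ℕ) = g - 1 then Λ a b else 0)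
      = Λ ⟨g - 1, by omega⟩ ⟨g - 1, by omega⟩ := by
    rw [Finset.sum_eq_single (⟨g - 1, by omega⟩ : Fin g)]
    · rw [Finset.sum_eq_single (⟨g - 1, by omega⟩ : Fin g)]
      · rw [if_pos ⟨by show g - 1 + 2 = g + 1; omega, rfl⟩]
      · intro b _ hb
        rw [if_neg]
        rintro ⟨-, h2⟩
        exact hb (Fin.ext h2)
      · intro h; exact absurd (Finset.mem_univ _) h
    · intro a _ ha
      apply Finset.sum_eq_zero
      intro b _
      rw [if_neg]
      rintro ⟨h1, -⟩
      exact ha (Fin.ext (show (a : ℕ) = g - 1 by omega))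
    · intro h; exact absurd (Finset.mem_univ _) h
  have C4 : ((((X - C X) ^ 2 *
        ∑ a : Fin g, ∑ b : Fin g, C (C (Λ a b)) * X ^ (a : ℕ) * (C X) ^ (b : ℕ) :
        Polynomial (Polynomial ℂ)).coeff (g + 1)).coeff (g - 1))
      = Λ ⟨g - 1, by omega⟩ ⟨g - 1, by omega⟩ := by
    rw [show (((X : Polynomial (Polynomial ℂ)) - C X) ^ 2 *
          ∑ a : Fin g, ∑ b : Fin g, C (C (Λ a b)) * X ^ (a : ℕ) * (C X) ^ (b : ℕ))
        = ∑ a : Fin g, ∑ b : Fin g,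
            ((X - C X) ^ 2 * (C (C (Λ a b)) * X ^ (a : ℕ) * (C X) ^ (b : ℕ))) by
      simp only [Finset.mul_sum]]
    simp only [finset_sum_coeff]
    rw [← hsum]
    apply Finset.sum_congr rfl
    intro a _
    apply Finset.sum_congr rfl
    intro b _
    have ha := a.isLt
    have hb := b.isLt
    rw [hsq]
    simp only [coeff_add]
    rw [hmono, hmono, hmono,
      if_neg (show ¬((a : ℕ) + 1 = g + 1 ∧ (b : ℕ) + 1 = g - 1) by omega),
      if_neg (show ¬((a : ℕ) = g + 1 ∧ (b : ℕ) + 2 = g - 1) by omega)]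
    simp
  have hco := congrArg (fun p : Polynomial (Polynomial ℂ) =>
    (p.coeff (g + 1)).coeff (g - 1)) key
  simp only [coeff_add, coeff_sub] at hco
  rw [C1, C2, C3a, C3b, C4] at hco
  linear_combination -hco
end

section
/- Let g = 2, let e_1, …, e_6 ∈ ℂ, let f(x) = ∏_{m=1}^{6}(x − e_m) = ∑_{k=0}^{6} λ_k x^k with Kleinian 2-polar F(x,z), let S be a 3-element subset of {1,…,6}, and let Λ be a symmetric 2×2 complex matrix satisfying P_S(x)P_{S^c}(z) + P_S(z)P_{S^c}(x) − F(x,z) = (x−z)² ∑_{i,j=1}^{2} Λ_{ij} x^{i−1} z^{j−1}. Then Λ_{11} = S_3(S) S_1(S^c) + S_3(S^c) S_1(S), Λ_{12} = Λ_{21} = −S_3(S) − S_3(S^c), and Λ_{22} = S_2(S) + S_2(S^c), where S_k(T) is the elementary symmetric polynomial of degree k in {e_i : i ∈ T}. -/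
open Finset

open Polynomial in
lemma cubic_expand (e : Fin 6 → ℂ) (T : Finset (Fin 6)) (hT : T.card = 3) (x : ℂ) :
    ∏ i ∈ T, (x - e i)
      = x ^ 3 - esymOn T 1 e * x ^ 2 + esymOn T 2 e * x - esymOn T 3 e := by
  have h := Multiset.prod_X_sub_X_eq_sum_esymm (T.val.map e)
  have hc : Multiset.card (T.val.map e) = 3 := by simp [hT]
  rw [hc] at h
  apply_fun Polynomial.eval x at h
  rw [Polynomial.eval_multiset_prod, Multiset.map_map, Multiset.map_map] at h
  have hL : (Multiset.map ((eval x ∘ fun t => X - C t) ∘ e) T.val).prod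
      = ∏ i ∈ T, (x - e i) := by
    rw [Finset.prod_eq_multiset_prod]
    congr 1
    apply Multiset.map_congr rfl
    intro i _
    simp
  rw [hL] at h
  rw [h]
  have he : ∀ k, (T.val.map e).esymm k = esymOn T k e := by
    intro k; rw [Finset.esymm_map_val]; rfl
  have h0 : esymOn T 0 e = 1 := by simp [esymOn]
  simp [Finset.sum_range_succ, he, h0]
  ring

/-- genus 2, Example 4.1 of the paper: for a 3-element subset `S` of the six
branch indices and the symmetric `2×2` partition matrix `Λ` of the 2-polar identity,
`Λ_{11} = S_3(S)S_1(S^c) + S_3(S^c)S_1(S)`, `Λ_{12} = Λ_{21} = −S_3(S) − S_3(S^c)` and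
`Λ_{22} = S_2(S) + S_2(S^c)`. -/
theorem genus_two_partition_matrix
    (e : Fin 6 → ℂ)
    (lam : ℕ → ℂ)
    (hlam : ∀ x : ℂ, ∏ m, (x - e m) = ∑ k ∈ Finset.range 7, lam k * x ^ k)
    (F : ℂ → ℂ → ℂ)
    (hF : ∀ x z : ℂ, F x z = 2 * lam 6 * x ^ 3 * z ^ 3
        + ∑ k ∈ Finset.range 3,
            x ^ k * z ^ k * (2 * lam (2 * k) + (x + z) * lam (2 * k + 1)))
    (S : Finset (Fin 6)) (hS : S.card = 3)
    (Λ : Matrix (Fin 2) (Fin 2) ℂ) (hΛsymm : Λ.IsSymm)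
    (hΛ : ∀ x z : ℂ,
        (∏ i ∈ S, (x - e i)) * (∏ j ∈ Sᶜ, (z - e j))
          + (∏ i ∈ S, (z - e i)) * (∏ j ∈ Sᶜ, (x - e j)) - F x z
        = (x - z) ^ 2 * ∑ a, ∑ b, Λ a b * x ^ (a : ℕ) * z ^ (b : ℕ)) :
    Λ 0 0 = esymOn S 3 e * esymOn Sᶜ 1 e + esymOn Sᶜ 3 e * esymOn S 1 e ∧
    Λ 0 1 = -esymOn S 3 e - esymOn Sᶜ 3 e ∧
    Λ 1 0 = -esymOn S 3 e - esymOn Sᶜ 3 e ∧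
    Λ 1 1 = esymOn S 2 e + esymOn Sᶜ 2 e := by
  have hSc : Sᶜ.card = 3 := by
    rw [Finset.card_compl, hS]
    rfl
  have hPS := cubic_expand e S hS
  have hPc := cubic_expand e Sᶜ hSc
  set s1 := esymOn S 1 e with hs1
  set s2 := esymOn S 2 e with hs2
  set s3 := esymOn S 3 e with hs3
  set t1 := esymOn Sᶜ 1 e with ht1
  set t2 := esymOn Sᶜ 2 e with ht2
  set t3 := esymOn Sᶜ 3 e with ht3
  have hf : ∀ x : ℂ, ∑ k ∈ Finset.range 7, lam k * x ^ k
      = (x^3 - s1*x^2 + s2*x - s3) * (x^3 - t1*x^2 + t2*x - t3) := by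
    intro x
    rw [← hlam x, ← Finset.prod_mul_prod_compl S, hPS x, hPc x]
  have hpoly : (∑ k ∈ Finset.range 7, Polynomial.C (lam k) * Polynomial.X ^ k : Polynomial ℂ)
      = Polynomial.C (s3*t3) - Polynomial.C (s2*t3 + s3*t2) * Polynomial.X
        + Polynomial.C (s1*t3 + s3*t1 + s2*t2) * Polynomial.X^2
        - Polynomial.C (s3 + t3 + s1*t2 + s2*t1) * Polynomial.X^3
        + Polynomial.C (s2 + t2 + s1*t1) * Polynomial.X^4
        - Polynomial.C (s1 + t1) * Polynomial.X^5 + Polynomial.X^6 := by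
    apply Polynomial.funext
    intro x
    simp only [Polynomial.eval_finset_sum, Polynomial.eval_add, Polynomial.eval_sub,
      Polynomial.eval_mul, Polynomial.eval_pow, Polynomial.eval_C, Polynomial.eval_X]
    rw [hf x]
    ring
  have hco : ∀ j : ℕ, lam j
      = (Polynomial.C (s3*t3) - Polynomial.C (s2*t3 + s3*t2) * Polynomial.X
        + Polynomial.C (s1*t3 + s3*t1 + s2*t2) * Polynomial.X^2
        - Polynomial.C (s3 + t3 + s1*t2 + s2*t1) * Polynomial.X^3
        + Polynomial.C (s2 + t2 + s1*t1) * Polynomial.X^4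
        - Polynomial.C (s1 + t1) * Polynomial.X^5
        + (Polynomial.X^6 : Polynomial ℂ)).coeff j ∨ 7 ≤ j := by
    intro j
    by_cases hj : j < 7
    · left
      have h := congrArg (fun p => Polynomial.coeff p j) hpoly
      simp only [Polynomial.finset_sum_coeff, Polynomial.coeff_C_mul,
        Polynomial.coeff_X_pow] at h
      rw [← h]
      rw [Finset.sum_eq_single j]
      · simp
      · intro b _ hb
        simp [Ne.symm hb]
      · intro hjm
        exact absurd (Finset.mem_range.mpr hj) hjm
    · right; omega
  have l0 : lam 0 = s3*t3 := by
    rcases hco 0 with h | h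
    · rw [h]
      simp only [Polynomial.coeff_add, Polynomial.coeff_sub, Polynomial.coeff_C_mul,
        Polynomial.coeff_X_pow, Polynomial.coeff_C, Polynomial.coeff_X]
      norm_num
      try ring
    · omega
  have l1 : lam 1 = -(s2*t3 + s3*t2) := by
    rcases hco 1 with h | h
    · rw [h]
      simp only [Polynomial.coeff_add, Polynomial.coeff_sub, Polynomial.coeff_C_mul,
        Polynomial.coeff_X_pow, Polynomial.coeff_C, Polynomial.coeff_X]
      norm_num
      try ring
    · omega
  have l2 : lam 2 = s1*t3 + s3*t1 + s2*t2 := by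
    rcases hco 2 with h | h
    · rw [h]
      simp only [Polynomial.coeff_add, Polynomial.coeff_sub, Polynomial.coeff_C_mul,
        Polynomial.coeff_X_pow, Polynomial.coeff_C, Polynomial.coeff_X]
      norm_num
      try ring
    · omega
  have l3 : lam 3 = -(s3 + t3 + s1*t2 + s2*t1) := by
    rcases hco 3 with h | h
    · rw [h]
      simp only [Polynomial.coeff_add, Polynomial.coeff_sub, Polynomial.coeff_C_mul,
        Polynomial.coeff_X_pow, Polynomial.coeff_C, Polynomial.coeff_X]
      norm_num
      try ring
    · omega
  have l4 : lam 4 = s2 + t2 + s1*t1 := by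
    rcases hco 4 with h | h
    · rw [h]
      simp only [Polynomial.coeff_add, Polynomial.coeff_sub, Polynomial.coeff_C_mul,
        Polynomial.coeff_X_pow, Polynomial.coeff_C, Polynomial.coeff_X]
      norm_num
      try ring
    · omega
  have l5 : lam 5 = -(s1 + t1) := by
    rcases hco 5 with h | h
    · rw [h]
      simp only [Polynomial.coeff_add, Polynomial.coeff_sub, Polynomial.coeff_C_mul,
        Polynomial.coeff_X_pow, Polynomial.coeff_C, Polynomial.coeff_X]
      norm_num
      try ring
    · omega
  have l6 : lam 6 = 1 := by
    rcases hco 6 with h | h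
    · rw [h]
      simp only [Polynomial.coeff_add, Polynomial.coeff_sub, Polynomial.coeff_C_mul,
        Polynomial.coeff_X_pow, Polynomial.coeff_C, Polynomial.coeff_X]
      norm_num
      try ring
    · omega
  have key : ∀ x z : ℂ, x ≠ z →
      Λ 0 0 + Λ 0 1 * z + Λ 1 0 * x + Λ 1 1 * (x*z)
        = (s3*t1 + t3*s1) + (-(s3+t3))*(x+z) + (s2+t2)*(x*z) := by
    intro x z hxz
    have h := hΛ x z
    rw [hF, hPS x, hPS z, hPc x, hPc z] at h
    simp only [Fin.sum_univ_two, Fin.isValue, Fin.val_zero, Fin.val_one, pow_zero, pow_one,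
      Finset.sum_range_succ, Finset.sum_range_zero] at h
    rw [l0, l1, l2, l3, l4, l5, l6] at h
    have h2 : (x - z)^2 * (Λ 0 0 + Λ 0 1 * z + Λ 1 0 * x + Λ 1 1 * (x*z))
        = (x - z)^2 * ((s3*t1 + t3*s1) + (-(s3+t3))*(x+z) + (s2+t2)*(x*z)) := by
      linear_combination -h
    exact mul_left_cancel₀ (pow_ne_zero 2 (sub_ne_zero.2 hxz)) h2
  have h1 := key 0 1 (by norm_num)
  have h2 := key 0 2 (by norm_num)
  have h3 := key 1 0 (by norm_num)
  have h4 := key 2 0 (by norm_num)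
  have h5 := key 1 2 (by norm_num)
  refine ⟨?_, ?_, ?_, ?_⟩
  · linear_combination 2*h1 - h2
  · linear_combination h2 - h1
  · linear_combination h4 - h3
  · linear_combination (h5 - h2 - h4 + h3)/2
end

section
/- Let g = 2, let e_1, …, e_6 ∈ ℂ, let f(x) = ∏_{m=1}^{6}(x − e_m) = ∑_{k=0}^{6} λ_k x^k with Kleinian 2-polar F(x,z), and for each 3-element subset S of {1,…,6} let Λ^{[S]} be the unique symmetric 2×2 matrix with P_S(x)P_{S^c}(z) + P_S(z)P_{S^c}(x) − F(x,z) = (x−z)² ∑_{i,j=1}^{2} Λ^{[S]}_{ij} x^{i−1} z^{j−1}. Then (1/2) ∑_S Λ^{[S]} = [[4λ_2, λ_3], [λ_3, 4λ_4]], where the sum runs over all 20 subsets S of size 3 (equivalently, the sum over the 10 unordered partitions {S, S^c} equals this matrix). -/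
/-!
Summing the defining identities of the `Λ^{[S]}` over `S` leaves `∑_S P_S(x) P_{Sᶜ}(z)`, the
coefficient of `t³` in `∏ᵢ (t(x - eᵢ) + (z - eᵢ)) = ∑ₖ λₖ (tx + z)ᵏ (t + 1)⁶⁻ᵏ`, the homogenized
`f`. Together with its mirror image and `-20 F(x,z)` this comes to
`(x - z)² (8λ₂ + 2λ₃(x + z) + 8λ₄xz)`, and a polynomial of bidegree `(1,1)` is determined by its
values off the diagonal.
-/

open Finset

theorem prod_mul_add_eq_sum_powersetCard {R ι : Type*} [CommSemiring R] [Fintype ι]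
    [DecidableEq ι] (a b : ι → R) (t : R) :
    ∏ i, (t * a i + b i) = ∑ k ∈ range (Fintype.card ι + 1),
      (∑ S ∈ powersetCard k univ, (∏ i ∈ S, a i) * ∏ i ∈ Sᶜ, b i) * t ^ k := by
  rw [prod_add, sum_powerset, card_univ]
  refine sum_congr rfl fun k _ => ?_
  rw [sum_mul]
  refine sum_congr rfl fun S hS => ?_
  rw [prod_mul_distrib, prod_const, (mem_powersetCard.mp hS).2, compl_eq_univ_sdiff]
  ring

theorem prod_sub_mul_eq_sum_of_forall_prod_sub_eq {K ι : Type*} [Field K] [Fintype ι]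
    (e : ι → K) (lam : ℕ → K)
    (hlam : ∀ x, ∏ i, (x - e i) = ∑ k ∈ range (Fintype.card ι + 1), lam k * x ^ k)
    (u : K) {v : K} (hv : v ≠ 0) :
    ∏ i, (u - v * e i) = ∑ k ∈ range (Fintype.card ι + 1),
      lam k * u ^ k * v ^ (Fintype.card ι - k) := by
  calc ∏ i, (u - v * e i) = ∏ i, (v * (u / v - e i)) := by
        refine prod_congr rfl fun i _ => ?_
        field_simp
    _ = v ^ Fintype.card ι * ∑ k ∈ range (Fintype.card ι + 1), lam k * (u / v) ^ k := by
        rw [prod_mul_distrib, prod_const, card_univ, hlam]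
    _ = _ := by
        rw [mul_sum]
        refine sum_congr rfl fun k hk => ?_
        rw [div_pow, pow_sub₀ _ hv (Nat.lt_succ_iff.mp (mem_range.mp hk))]
        field_simp

section MonomialForm

variable {R : Type*} [CommRing R]

def monomialForm (M : Matrix (Fin 2) (Fin 2) R) (x z : R) : R :=
  ∑ a, ∑ b, M a b * x ^ (a : ℕ) * z ^ (b : ℕ)

theorem monomialForm_fin_two (M : Matrix (Fin 2) (Fin 2) R) (x z : R) :
    monomialForm M x z = M 0 0 + M 0 1 * z + M 1 0 * x + M 1 1 * x * z := by
  simp only [monomialForm, Fin.sum_univ_two, Fin.val_zero, Fin.val_one, pow_zero, pow_one]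
  ring

theorem monomialForm_sum {α : Type*} (s : Finset α) (M : α → Matrix (Fin 2) (Fin 2) R)
    (x z : R) : monomialForm (∑ i ∈ s, M i) x z = ∑ i ∈ s, monomialForm (M i) x z := by
  simp only [monomialForm, Matrix.sum_apply, sum_mul, Finset.sum_comm (t := s)]

theorem eq_of_forall_sq_sub_mul_monomialForm_eq [IsDomain R] [CharZero R]
    {M N : Matrix (Fin 2) (Fin 2) R}
    (h : ∀ x z, (x - z) ^ 2 * monomialForm M x z = (x - z) ^ 2 * monomialForm N x z) :
    M = N := by
  have hMN : ∀ x z, x ≠ z →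
      M 0 0 + M 0 1 * z + M 1 0 * x + M 1 1 * x * z
        = N 0 0 + N 0 1 * z + N 1 0 * x + N 1 1 * x * z := fun x z hxz => by
    simpa only [monomialForm_fin_two] using
      mul_left_cancel₀ (pow_ne_zero 2 (sub_ne_zero.mpr hxz)) (h x z)
  have h10 := hMN 1 0 one_ne_zero
  have h20 := hMN 2 0 two_ne_zero
  have h01 := hMN 0 1 zero_ne_one
  have h02 := hMN 0 2 two_ne_zero.symm
  have h1m1 := hMN 1 (-1) (by norm_num)
  ext i j
  revert i j
  simp only [Fin.forall_fin_two]
  refine ⟨⟨?_, ?_⟩, ?_, ?_⟩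
  · linear_combination 2 * h10 - h20
  · linear_combination h02 - h01
  · linear_combination h20 - h10
  · linear_combination h10 + h01 - h02 - h1m1

end MonomialForm

section GenusTwo

variable {K : Type*} [Field K] [CharZero K]

def kleinianPolar (lam : ℕ → K) (x z : K) : K :=
  2 * lam 6 * x ^ 3 * z ^ 3
    + ∑ k ∈ range 3, x ^ k * z ^ k * (2 * lam (2 * k) + (x + z) * lam (2 * k + 1))

theorem sum_powersetCard_three_prod_mul_prod_compl (e : Fin 6 → K) (lam : ℕ → K)
    (hlam : ∀ x, ∏ m, (x - e m) = ∑ k ∈ range 7, lam k * x ^ k) (x z : K) :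
    ∑ S ∈ powersetCard 3 univ, (∏ i ∈ S, (x - e i)) * ∏ j ∈ Sᶜ, (z - e j)
      = 20 * lam 0 + 10 * lam 1 * (x + z) + lam 2 * (4 * z ^ 2 + 12 * x * z + 4 * x ^ 2)
        + lam 3 * (z ^ 3 + 9 * x * z ^ 2 + 9 * x ^ 2 * z + x ^ 3)
        + lam 4 * (4 * x * z ^ 3 + 12 * x ^ 2 * z ^ 2 + 4 * x ^ 3 * z)
        + lam 5 * (10 * x ^ 2 * z ^ 3 + 10 * x ^ 3 * z ^ 2) + 20 * lam 6 * x ^ 3 * z ^ 3 := by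
  have gen : ∀ t : K, t + 1 ≠ 0 →
      ∑ k ∈ range 7, (∑ S ∈ powersetCard k univ,
          (∏ i ∈ S, (x - e i)) * ∏ j ∈ Sᶜ, (z - e j)) * t ^ k
        = ∑ k ∈ range 7, lam k * (t * x + z) ^ k * (t + 1) ^ (6 - k) := fun t ht => by
    have expand := prod_mul_add_eq_sum_powersetCard (fun i => x - e i) (fun i => z - e i) t
    have homog := prod_sub_mul_eq_sum_of_forall_prod_sub_eq e lam (by simpa using hlam)
      (t * x + z) ht
    simp only [Fintype.card_fin] at expand homog
    rw [← expand, ← homog]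
    exact prod_congr rfl fun i _ => by ring
  have h0 := gen 0 (by norm_num)
  have h1 := gen 1 (by norm_num)
  have h2 := gen 2 (by norm_num)
  have h3 := gen 3 (by norm_num)
  have h4 := gen 4 (by norm_num)
  have h5 := gen 5 (by norm_num)
  have h6 := gen 6 (by norm_num)
  simp only [sum_range_succ, sum_range_zero] at h0 h1 h2 h3 h4 h5 h6
  -- The weights form the `t³` row of the inverse Vandermonde matrix at the nodes `0, …, 6`.
  linear_combination (-49/48 : K) * h0 + (29/6 : K) * h1 + (-461/48 : K) * h2 + (31/3 : K) * h3
    + (-307/48 : K) * h4 + (13/6 : K) * h5 + (-5/16 : K) * h6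

theorem sum_powersetCard_three_partition_sub_kleinianPolar (e : Fin 6 → K) (lam : ℕ → K)
    (hlam : ∀ x, ∏ m, (x - e m) = ∑ k ∈ range 7, lam k * x ^ k) (x z : K) :
    ∑ S ∈ powersetCard 3 univ,
        ((∏ i ∈ S, (x - e i)) * (∏ j ∈ Sᶜ, (z - e j))
          + (∏ i ∈ S, (z - e i)) * (∏ j ∈ Sᶜ, (x - e j)) - kleinianPolar lam x z)
      = (x - z) ^ 2 * monomialForm ((2 : K) • !![4 * lam 2, lam 3; lam 3, 4 * lam 4]) x z := by
  rw [sum_sub_distrib, sum_add_distrib, sum_const, card_powersetCard, card_univ,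
    Fintype.card_fin, sum_powersetCard_three_prod_mul_prod_compl e lam hlam,
    sum_powersetCard_three_prod_mul_prod_compl e lam hlam, monomialForm_fin_two]
  simp only [kleinianPolar, sum_range_succ, sum_range_zero, Matrix.smul_apply, Matrix.of_apply,
    Matrix.cons_val', Matrix.cons_val_zero, Matrix.cons_val_one, Matrix.cons_val_fin_one,
    smul_eq_mul, nsmul_eq_mul, Nat.choose]
  push_cast
  ring

end GenusTwo

theorem genus_two_residual_matrix_sum_general
    (e : Fin 6 → ℂ)
    (lam : ℕ → ℂ)
    (hlam : ∀ x : ℂ, ∏ m, (x - e m) = ∑ k ∈ Finset.range 7, lam k * x ^ k)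
    (F : ℂ → ℂ → ℂ)
    (hF : ∀ x z : ℂ, F x z = 2 * lam 6 * x ^ 3 * z ^ 3
        + ∑ k ∈ Finset.range 3,
            x ^ k * z ^ k * (2 * lam (2 * k) + (x + z) * lam (2 * k + 1)))
    (L : Finset (Fin 6) → Matrix (Fin 2) (Fin 2) ℂ)
    (hL : ∀ S ∈ Finset.powersetCard 3 (Finset.univ : Finset (Fin 6)), ∀ x z : ℂ,
        (∏ i ∈ S, (x - e i)) * (∏ j ∈ Sᶜ, (z - e j))
          + (∏ i ∈ S, (z - e i)) * (∏ j ∈ Sᶜ, (x - e j)) - F x z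
        = (x - z) ^ 2 * ∑ a, ∑ b, L S a b * x ^ (a : ℕ) * z ^ (b : ℕ)) :
    (1 / 2 : ℂ) • ∑ S ∈ Finset.powersetCard 3 (Finset.univ : Finset (Fin 6)), L S
      = !![4 * lam 2, lam 3; lam 3, 4 * lam 4] := by
  obtain rfl : F = kleinianPolar lam := funext fun x => funext (hF x)
  have hsum : ∑ S ∈ powersetCard 3 univ, L S
      = (2 : ℂ) • !![4 * lam 2, lam 3; lam 3, 4 * lam 4] := by
    refine eq_of_forall_sq_sub_mul_monomialForm_eq fun x z => ?_
    rw [← sum_powersetCard_three_partition_sub_kleinianPolar e lam hlam, monomialForm_sum,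
      mul_sum]
    exact sum_congr rfl fun S hS => (hL S hS x z).symm
  rw [hsum, smul_smul]
  norm_num

/-- genus 2, equation (4.2) of the paper, rational part: summing the
partition matrices `Λ^{[S]}` over all 20 subsets `S` of size 3 (twice the 10 unordered
partitions) and halving gives `Λ_2 = [[4λ_2, λ_3], [λ_3, 4λ_4]]`. -/
theorem genus_two_residual_matrix_sum
    (e : Fin 6 → ℂ)
    (lam : ℕ → ℂ)
    (hlam : ∀ x : ℂ, ∏ m, (x - e m) = ∑ k ∈ Finset.range 7, lam k * x ^ k)
    (F : ℂ → ℂ → ℂ)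
    (hF : ∀ x z : ℂ, F x z = 2 * lam 6 * x ^ 3 * z ^ 3
        + ∑ k ∈ Finset.range 3,
            x ^ k * z ^ k * (2 * lam (2 * k) + (x + z) * lam (2 * k + 1)))
    (L : Finset (Fin 6) → Matrix (Fin 2) (Fin 2) ℂ)
    (hLsymm : ∀ S ∈ Finset.powersetCard 3 (Finset.univ : Finset (Fin 6)), (L S).IsSymm)
    (hL : ∀ S ∈ Finset.powersetCard 3 (Finset.univ : Finset (Fin 6)), ∀ x z : ℂ,
        (∏ i ∈ S, (x - e i)) * (∏ j ∈ Sᶜ, (z - e j))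
          + (∏ i ∈ S, (z - e i)) * (∏ j ∈ Sᶜ, (x - e j)) - F x z
        = (x - z) ^ 2 * ∑ a, ∑ b, L S a b * x ^ (a : ℕ) * z ^ (b : ℕ)) :
    (1 / 2 : ℂ) • ∑ S ∈ Finset.powersetCard 3 (Finset.univ : Finset (Fin 6)), L S
      = !![4 * lam 2, lam 3; lam 3, 4 * lam 4] :=
  genus_two_residual_matrix_sum_general e lam hlam F hF L hL
end

section
/- Let g = 3, let e_1, …, e_8 ∈ ℂ, let f(x) = ∏_{m=1}^{8}(x − e_m) = ∑_{k=0}^{8} λ_k x^k with Kleinian 2-polar F(x,z), and for each 4-element subset S of {1,…,8} let Λ^{[S]} be the unique symmetric 3×3 matrix with P_S(x)P_{S^c}(z) + P_S(z)P_{S^c}(x) − F(x,z) = (x−z)² ∑_{i,j=1}^{3} Λ^{[S]}_{ij} x^{i−1} z^{j−1}. Then (1/2) ∑_S Λ^{[S]} = [[15λ_2, 5λ_3, λ_4], [5λ_3, 18λ_4, 5λ_5], [λ_4, 5λ_5, 15λ_6]], where the sum runs over all 140 subsets S of size 4 (equivalently, the sum over the 70 unordered partitions {S, S^c} equals this matrix).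 -/
/-!
Summing the defining identities over all `S`, the left-hand side becomes
`G(x,z) + G(z,x) - 70 F(x,z)` with `G(x,z) = ∑_{|S|=4} P_S(x) P_{S^c}(z)`. This `G` is the
coefficient of `t⁴` in `∏_m (t(x - e_m) + (z - e_m)) = ∑_j λ_j (tx + z)^j (1 + t)^{8-j}`, the
homogenised form of `f`, so `G(x,z) = ∑_j λ_j ∑_i C(j,i) C(8-j,4-i) x^i z^{j-i}`. Then
`G(x,z) + G(z,x) - 70 F(x,z)` is `(x - z)²` times the bilinear form of twice the claimed matrix,
and a polynomial of degree `< 3` in each variable is determined by its values off the diagonal.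
-/

open Finset Polynomial

section CommRing

variable {R : Type*} [CommRing R]

theorem coeff_prod_C_mul_X_add_C {ι : Type*} [Fintype ι] [DecidableEq ι] (a b : ι → R)
    (k : ℕ) :
    (∏ m, (C (a m) * X + C (b m))).coeff k
      = ∑ S ∈ powersetCard k univ, (∏ i ∈ S, a i) * ∏ j ∈ Sᶜ, b j := by
  have hterm : ∀ S : Finset ι, (∏ i ∈ S, C (a i) * X) * ∏ j ∈ univ \ S, C (b j)
      = C ((∏ i ∈ S, a i) * ∏ j ∈ Sᶜ, b j) * X ^ S.card := by
    intro S
    rw [prod_mul_distrib, prod_const, ← compl_eq_univ_sdiff, ← map_prod, ← map_prod, C_mul]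
    ring
  rw [prod_add, sum_congr rfl fun S _ => hterm S, finsetSum_coeff, powersetCard_eq_filter,
    sum_filter]
  simp only [coeff_C_mul_X_pow, eq_comm]

theorem coeff_C_mul_X_add_C_pow (x z : R) (j i : ℕ) :
    ((C x * X + C z) ^ j).coeff i = j.choose i * x ^ i * z ^ (j - i) := by
  rw [show C x * X + C z = (X + C z).comp (C x * X) by simp, ← pow_comp, comp_C_mul_X_coeff,
    coeff_X_add_C_pow]
  ring

theorem eq_of_infinite_sum_mul_pow_eq [IsDomain R] {n : ℕ} {c d : Fin n → R} {s : Set R}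
    (hs : s.Infinite) (h : ∀ x ∈ s, ∑ a, c a * x ^ (a : ℕ) = ∑ a, d a * x ^ (a : ℕ)) :
    c = d := by
  have hcoeff : ∀ (c : Fin n → R) (a : Fin n), (∑ b, C (c b) * X ^ (b : ℕ)).coeff a = c a := by
    intro c a
    simp [finsetSum_coeff, Fin.val_inj]
  have hpoly : ∑ b, C (c b) * X ^ (b : ℕ) = ∑ b, C (d b) * X ^ (b : ℕ) :=
    eq_of_infinite_eval_eq _ _ (hs.mono fun x hx => by simpa [eval_finsetSum] using h x hx)
  funext a
  rw [← hcoeff c a, hpoly, hcoeff]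

theorem Matrix.eq_of_sum_mul_pow_mul_pow_eq_of_ne [IsDomain R] [Infinite R] {m n : ℕ}
    {A B : Matrix (Fin m) (Fin n) R}
    (h : ∀ x z : R, x ≠ z → ∑ a, ∑ b, A a b * x ^ (a : ℕ) * z ^ (b : ℕ)
      = ∑ a, ∑ b, B a b * x ^ (a : ℕ) * z ^ (b : ℕ)) : A = B := by
  have hrow : ∀ z a, ∑ b, A a b * z ^ (b : ℕ) = ∑ b, B a b * z ^ (b : ℕ) := by
    intro z
    refine congrFun (eq_of_infinite_sum_mul_pow_eq (Set.finite_singleton z).infinite_compl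
      fun x hx => ?_)
    simpa [sum_mul, mul_right_comm _ (x ^ _)] using h x z hx
  funext a
  exact eq_of_infinite_sum_mul_pow_eq Set.infinite_univ fun z _ => hrow z a

end CommRing

section Field

variable {K : Type*} [Field K] [Infinite K] {ι : Type*} [Fintype ι] {e : ι → K} {lam : ℕ → K}

-- Both sides evaluate to `(t + 1)ⁿ f((xt + z)/(t + 1))` at every `t ≠ -1`.
theorem prod_C_mul_X_add_C_eq_sum
    (hlam : ∀ y, ∏ m, (y - e m) = ∑ k ∈ range (Fintype.card ι + 1), lam k * y ^ k) (x z : K) :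
    ∏ m, (C (x - e m) * X + C (z - e m))
      = ∑ k ∈ range (Fintype.card ι + 1),
          C (lam k) * (C x * X + C z) ^ k * (X + 1) ^ (Fintype.card ι - k) := by
  apply eq_of_infinite_eval_eq
  refine (Set.finite_singleton (-1 : K)).infinite_compl.mono fun t ht => ?_
  have ht : t + 1 ≠ 0 := fun h => ht (eq_neg_of_add_eq_zero_left h)
  simp only [Set.mem_ofPred_eq, eval_prod, eval_finsetSum, eval_add, eval_mul, eval_C, eval_X,
    eval_pow, eval_one]
  calc ∏ m, ((x - e m) * t + (z - e m))
      = ∏ m, ((t + 1) * ((x * t + z) / (t + 1) - e m)) :=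
        prod_congr rfl fun m _ => by field_simp; ring
    _ = (t + 1) ^ Fintype.card ι
          * ∑ k ∈ range (Fintype.card ι + 1), lam k * ((x * t + z) / (t + 1)) ^ k := by
        rw [prod_mul_distrib, prod_const, card_univ, hlam]
    _ = _ := by
        rw [mul_sum]
        refine sum_congr rfl fun k hk => ?_
        obtain ⟨l, hl⟩ := Nat.exists_eq_add_of_le (Nat.lt_succ_iff.mp (mem_range.mp hk))
        rw [hl, Nat.add_sub_cancel_left, pow_add, div_pow]
        field_simp

theorem sum_powersetCard_prod_mul_prod_compl [DecidableEq ι]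
    (hlam : ∀ y, ∏ m, (y - e m) = ∑ k ∈ range (Fintype.card ι + 1), lam k * y ^ k)
    (k : ℕ) (x z : K) :
    ∑ S ∈ powersetCard k univ, (∏ i ∈ S, (x - e i)) * ∏ j ∈ Sᶜ, (z - e j)
      = ∑ j ∈ range (Fintype.card ι + 1), lam j * ∑ i ∈ range (k + 1),
          j.choose i * (Fintype.card ι - j).choose (k - i) * x ^ i * z ^ (j - i) := by
  rw [← coeff_prod_C_mul_X_add_C, prod_C_mul_X_add_C_eq_sum hlam, finsetSum_coeff]
  refine sum_congr rfl fun j _ => ?_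
  rw [mul_assoc, coeff_C_mul, coeff_mul, Nat.sum_antidiagonal_eq_sum_range_succ_mk]
  simp only [coeff_C_mul_X_add_C_pow, coeff_X_add_one_pow]
  exact congrArg _ (sum_congr rfl fun i _ => by ring)

end Field

theorem genus_three_residual_matrix_sum_general
    (e : Fin 8 → ℂ)
    (lam : ℕ → ℂ)
    (hlam : ∀ x : ℂ, ∏ m, (x - e m) = ∑ k ∈ Finset.range 9, lam k * x ^ k)
    (F : ℂ → ℂ → ℂ)
    (hF : ∀ x z : ℂ, F x z = 2 * lam 8 * x ^ 4 * z ^ 4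
        + ∑ k ∈ Finset.range 4,
            x ^ k * z ^ k * (2 * lam (2 * k) + (x + z) * lam (2 * k + 1)))
    (L : Finset (Fin 8) → Matrix (Fin 3) (Fin 3) ℂ)
    (hL : ∀ S ∈ Finset.powersetCard 4 (Finset.univ : Finset (Fin 8)), ∀ x z : ℂ,
        (∏ i ∈ S, (x - e i)) * (∏ j ∈ Sᶜ, (z - e j))
          + (∏ i ∈ S, (z - e i)) * (∏ j ∈ Sᶜ, (x - e j)) - F x z
        = (x - z) ^ 2 * ∑ a, ∑ b, L S a b * x ^ (a : ℕ) * z ^ (b : ℕ)) :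
    (1 / 2 : ℂ) • ∑ S ∈ Finset.powersetCard 4 (Finset.univ : Finset (Fin 8)), L S
      = !![15 * lam 2, 5 * lam 3, lam 4;
           5 * lam 3, 18 * lam 4, 5 * lam 5;
           lam 4, 5 * lam 5, 15 * lam 6] := by
  set M : Matrix (Fin 3) (Fin 3) ℂ := !![15 * lam 2, 5 * lam 3, lam 4;
           5 * lam 3, 18 * lam 4, 5 * lam 5;
           lam 4, 5 * lam 5, 15 * lam 6]
  have hsum : ∀ x z, (x - z) ^ 2
        * ∑ a, ∑ b, (∑ S ∈ powersetCard 4 univ, L S) a b * x ^ (a : ℕ) * z ^ (b : ℕ)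
      = ∑ S ∈ powersetCard 4 univ, (∏ i ∈ S, (x - e i)) * ∏ j ∈ Sᶜ, (z - e j)
        + ∑ S ∈ powersetCard 4 univ, (∏ i ∈ S, (z - e i)) * ∏ j ∈ Sᶜ, (x - e j)
        - 70 * F x z := by
    intro x z
    calc _ = ∑ S ∈ powersetCard 4 univ,
          (x - z) ^ 2 * ∑ a, ∑ b, L S a b * x ^ (a : ℕ) * z ^ (b : ℕ) := by
          simp only [Matrix.sum_apply, sum_mul, mul_sum]
          exact (sum_congr rfl fun _ _ => sum_comm).trans sum_comm
      _ = _ := by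
          rw [← sum_congr rfl fun S hS => hL S hS x z, sum_sub_distrib, sum_add_distrib,
            sum_const, card_powersetCard, card_univ, Fintype.card_fin]
          norm_num [Nat.choose]
  have hL2 : ∑ S ∈ powersetCard 4 univ, L S = (2 : ℂ) • M := by
    refine Matrix.eq_of_sum_mul_pow_mul_pow_eq_of_ne fun x z hxz => ?_
    refine mul_left_cancel₀ (pow_ne_zero 2 (sub_ne_zero.mpr hxz)) ?_
    rw [hsum, sum_powersetCard_prod_mul_prod_compl (by simpa using hlam),
      sum_powersetCard_prod_mul_prod_compl (by simpa using hlam), hF]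
    simp only [Fin.sum_univ_three, sum_range_succ, sum_range_zero, Fintype.card_fin, M,
      Matrix.smul_apply, Matrix.of_apply, Matrix.cons_val', Matrix.cons_val_zero,
      Matrix.cons_val_one, Matrix.cons_val_two, Matrix.tail_cons, Matrix.cons_val_fin_one,
      Fin.val_zero, Fin.val_one, Fin.val_two, smul_eq_mul]
    norm_num [Nat.choose]
    ring
  rw [hL2, smul_smul]
  norm_num

/-- genus 3, equation (4.4) of the paper, rational part: summing the
partition matrices `Λ^{[S]}` over all 140 subsets `S` of size 4 (twice the 70 unordered
partitions) and halving gives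
`Λ_3 = [[15λ_2, 5λ_3, λ_4], [5λ_3, 18λ_4, 5λ_5], [λ_4, 5λ_5, 15λ_6]]`. -/
theorem genus_three_residual_matrix_sum
    (e : Fin 8 → ℂ)
    (lam : ℕ → ℂ)
    (hlam : ∀ x : ℂ, ∏ m, (x - e m) = ∑ k ∈ Finset.range 9, lam k * x ^ k)
    (F : ℂ → ℂ → ℂ)
    (hF : ∀ x z : ℂ, F x z = 2 * lam 8 * x ^ 4 * z ^ 4
        + ∑ k ∈ Finset.range 4,
            x ^ k * z ^ k * (2 * lam (2 * k) + (x + z) * lam (2 * k + 1)))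
    (L : Finset (Fin 8) → Matrix (Fin 3) (Fin 3) ℂ)
    (hLsymm : ∀ S ∈ Finset.powersetCard 4 (Finset.univ : Finset (Fin 8)), (L S).IsSymm)
    (hL : ∀ S ∈ Finset.powersetCard 4 (Finset.univ : Finset (Fin 8)), ∀ x z : ℂ,
        (∏ i ∈ S, (x - e i)) * (∏ j ∈ Sᶜ, (z - e j))
          + (∏ i ∈ S, (z - e i)) * (∏ j ∈ Sᶜ, (x - e j)) - F x z
        = (x - z) ^ 2 * ∑ a, ∑ b, L S a b * x ^ (a : ℕ) * z ^ (b : ℕ)) :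
    (1 / 2 : ℂ) • ∑ S ∈ Finset.powersetCard 4 (Finset.univ : Finset (Fin 8)), L S
      = !![15 * lam 2, 5 * lam 3, lam 4;
           5 * lam 3, 18 * lam 4, 5 * lam 5;
           lam 4, 5 * lam 5, 15 * lam 6] :=
  genus_three_residual_matrix_sum_general e lam hlam F hF L hL
end
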